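/- arXiv:1808.04922 — 8 statements merged into one kernel-verified Lean document; each statement's English description precedes it below -/
import Mathlib

section
/- Let n ≥ 2 and 0 < r < R. There exists a constant K₁ = K₁(n,r,R) > 0 such that for all sets E₁, E₂ ∈ S_{r,R} one has d_H(E₁,E₂)^{n+1} ≤ K₁ · d̃²(E₁,E₂) and d_H(E₁,E₂)^{n+1} ≤ K₁ · d̃²(E₂,E₁). -/
/-!
Let `δ = d_H(E₁, E₂) > 0`. Some point `x` of one set, say `E₁`, lies at distance `> δ/2` from
the other. Since `E₁` is star-shaped with respect to `B_r(0)`, the homothetic image of this ball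
under `z ↦ (1 - t) x + t z` lies in `E₁`; for `t ≍ δ/R` this is a ball of radius `≍ δ r/R` close
to `x`. Half of it lies inside `E₁ \ E₂` at distance `≳ δ r/R` from both `∂E₁` and `∂E₂`, so both
integrals `d̃²(E₁,E₂)` and `d̃²(E₂,E₁)` are at least `(δ r/R)^{n+1}` up to a dimensional constant.
-/

open MeasureTheory Metric Set
open scoped ENNReal symmDiff

noncomputable section

/-- `Ω` is a bounded open set, star-shaped with respect to the ball `B_r(0)`. -/
def StarShaped (n : ℕ) (r : ℝ) (Ω : Set (EuclideanSpace ℝ (Fin n))) : Prop :=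
  IsOpen Ω ∧ Bornology.IsBounded Ω ∧
    ∀ y ∈ ball (0 : EuclideanSpace ℝ (Fin n)) r, ∀ x ∈ Ω, segment ℝ y x ⊆ Ω

/-- `Ω ∈ S_{r,R}`: star-shaped with respect to `B_r(0)` and contained in `B_R(0)`. -/
def SrR (n : ℕ) (r R : ℝ) (Ω : Set (EuclideanSpace ℝ (Fin n))) : Prop :=
  StarShaped n r Ω ∧ Ω ⊆ ball 0 R

/-- The square of the pseudo-distance: `d̃(F,E)² = ∫_{E Δ F} dist(x,∂E) dx`. -/
def tildeDistSq (n : ℕ) (F E : Set (EuclideanSpace ℝ (Fin n))) : ℝ :=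
  ∫ x in (E ∆ F), infDist x (frontier E)

open Bornology

section Geometry

variable {E : Type*} [NormedAddCommGroup E] [NormedSpace ℝ E]

lemma ball_one_sub_smul_subset {r : ℝ} {Ω : Set E}
    (hΩ : ∀ y ∈ ball (0 : E) r, ∀ x ∈ Ω, segment ℝ y x ⊆ Ω) {x : E} (hx : x ∈ Ω) {t : ℝ}
    (ht0 : 0 < t) (ht1 : t ≤ 1) : ball ((1 - t) • x) (t * r) ⊆ Ω := by
  intro z hz
  have hy : t⁻¹ • (z - (1 - t) • x) ∈ ball (0 : E) r := by
    rw [mem_ball, dist_eq_norm] at hz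
    rw [mem_ball_zero_iff, norm_smul, norm_inv, Real.norm_of_nonneg ht0.le,
      inv_mul_lt_iff₀ ht0]
    exact hz
  refine hΩ _ hy x hx ⟨t, 1 - t, ht0.le, by linarith, by ring, ?_⟩
  rw [smul_smul, mul_inv_cancel₀ ht0.ne', one_smul, sub_add_cancel]

lemma frontier_nonempty_of_isBounded [Nontrivial E] {s : Set E} (hb : IsBounded s)
    (hne : s.Nonempty) : (frontier s).Nonempty :=
  nonempty_frontier_iff.2 ⟨hne, by rintro rfl; exact NormedSpace.unbounded_univ ℝ E hb⟩

end Geometry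

section Distance

variable {α : Type*} [PseudoMetricSpace α] {s : Set α} {x : α}

lemma le_infDist_frontier_of_ball_subset (hne : (frontier s).Nonempty) {ρ : ℝ}
    (h : ball x ρ ⊆ s) : ρ ≤ infDist x (frontier s) :=
  (le_infDist hne).2 fun _ hw => not_lt.1 fun hlt =>
    hw.2 (interior_maximal h isOpen_ball (mem_ball'.2 hlt))

lemma infDist_le_infDist_frontier (hne : (frontier s).Nonempty) :
    infDist x s ≤ infDist x (frontier s) :=
  infDist_closure (x := x) (s := s) ▸ infDist_le_infDist_of_subset frontier_subset_closure hne

lemma exists_lt_infDist_of_lt_hausdorffDist {t : Set α} {d : ℝ} (hd : 0 ≤ d)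
    (h : d < hausdorffDist s t) : (∃ x ∈ s, d < infDist x t) ∨ ∃ x ∈ t, d < infDist x s := by
  by_contra! hle
  exact (hausdorffDist_le_of_infDist hd hle.1 hle.2).not_gt h

end Distance

variable {n : ℕ} {r R : ℝ}

lemma exists_closedBall_subset_symmDiff_le_infDist_frontier
    {A B : Set (EuclideanSpace ℝ (Fin n))} (hA : SrR n r R A) (hB : B ⊆ ball 0 R) (hr : 0 < r)
    (hrR : r ≤ R) {x : EuclideanSpace ℝ (Fin n)} (hx : x ∈ A) {δ : ℝ} (hδ : 0 < δ)
    (hfar : δ / 2 < infDist x B) :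
    ∃ y, closedBall y (δ * r / (8 * R)) ⊆ A ∆ B ∧ ∀ z ∈ closedBall y (δ * r / (8 * R)),
      δ * r / (8 * R) ≤ infDist z (frontier A) ∧ δ * r / (8 * R) ≤ infDist z (frontier B) := by
  obtain ⟨b, hb⟩ : B.Nonempty := nonempty_iff_ne_empty.2 fun h => by
    rw [h, infDist_empty] at hfar; linarith
  have hxR : ‖x‖ < R := mem_ball_zero_iff.1 (hA.2 hx)
  have hxb : δ / 2 < dist x b := hfar.trans_le (infDist_le_dist_of_mem hb)
  have : Nontrivial (EuclideanSpace ℝ (Fin n)) :=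
    nontrivial_of_ne x b fun h => by rw [h, dist_self] at hxb; linarith
  have hR : 0 < R := (norm_nonneg x).trans_lt hxR
  have hδR : δ < 4 * R := by
    linarith [dist_le_norm_add_norm x b, mem_ball_zero_iff.1 (hB hb)]
  -- `t = δ/(4R)` gives `t R + 2ρ = t (R + r) ≤ δ/2`, so `closedBall y ρ` stays `ρ`-far from `B`.
  set t := δ / (4 * R)
  set ρ := δ * r / (8 * R)
  have ht0 : 0 < t := by positivity
  have hρ : 0 < ρ := by positivity
  have htr : t * r = 2 * ρ := by ring
  have htR : t * R = δ / 4 := by simp only [t]; field_simp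
  have hrt : t * r ≤ t * R := mul_le_mul_of_nonneg_left hrR ht0.le
  set y := (1 - t) • x
  have hcone : ball y (t * r) ⊆ A :=
    ball_one_sub_smul_subset hA.1.2.2 hx ht0 ((div_le_one (by positivity)).2 hδR.le)
  have hyx : dist y x ≤ t * R := by
    rw [dist_eq_norm, show y - x = (-t) • x by module, norm_smul, norm_neg,
      Real.norm_of_nonneg ht0.le]
    exact mul_le_mul_of_nonneg_left hxR.le ht0.le
  have hball : ∀ z ∈ closedBall y ρ, ball z ρ ⊆ A := fun z hz =>
    (ball_subset_ball' (by linarith [mem_closedBall.1 hz])).trans hcone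
  have hfarB : ∀ z ∈ closedBall y ρ, ρ < infDist z B := fun z hz => by
    linarith [infDist_le_infDist_add_dist (s := B) (x := x) (y := z),
      dist_triangle x y z, dist_comm x y, dist_comm y z, mem_closedBall.1 hz]
  have hfrA := frontier_nonempty_of_isBounded hA.1.2.1 ⟨x, hx⟩
  have hfrB := frontier_nonempty_of_isBounded (isBounded_ball.subset hB) ⟨b, hb⟩
  refine ⟨y, fun z hz => Or.inl ⟨hball z hz (mem_ball_self hρ), fun hzB => ?_⟩, fun z hz =>
    ⟨le_infDist_frontier_of_ball_subset hfrA (hball z hz),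
      (hfarB z hz).le.trans (infDist_le_infDist_frontier hfrB)⟩⟩
  linarith [hfarB z hz, infDist_zero_of_mem hzB]

lemma pow_succ_mul_le_tildeDistSq {E F : Set (EuclideanSpace ℝ (Fin n))}
    (hb : IsBounded (E ∆ F)) {y : EuclideanSpace ℝ (Fin n)} {ρ : ℝ} (hρ : 0 ≤ ρ)
    (hsub : closedBall y ρ ⊆ E ∆ F) (hle : ∀ z ∈ closedBall y ρ, ρ ≤ infDist z (frontier E)) :
    ρ ^ (n + 1) * volume.real (ball (0 : EuclideanSpace ℝ (Fin n)) 1) ≤ tildeDistSq n F E := by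
  have hint : IntegrableOn (fun z => infDist z (frontier E)) (E ∆ F) :=
    ((continuous_infDist_pt _).locallyIntegrable.integrableOn_isCompact
      hb.isCompact_closure).mono_set subset_closure
  calc ρ ^ (n + 1) * volume.real (ball (0 : EuclideanSpace ℝ (Fin n)) 1)
      = ρ * volume.real (closedBall y ρ) := by
        rw [Measure.addHaar_real_closedBall volume y hρ, finrank_euclideanSpace_fin]; ring
    _ ≤ ∫ z in closedBall y ρ, infDist z (frontier E) :=
        setIntegral_ge_of_const_le_real measurableSet_closedBall measure_closedBall_lt_top.ne
          hle (hint.mono_set hsub)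
    _ ≤ tildeDistSq n F E :=
        setIntegral_mono_set hint (Filter.Eventually.of_forall fun _ => infDist_nonneg)
          hsub.eventuallyLE

lemma pow_succ_mul_le_tildeDistSq_of_lt_infDist {A B : Set (EuclideanSpace ℝ (Fin n))}
    (hA : SrR n r R A) (hB : B ⊆ ball 0 R) (hr : 0 < r) (hrR : r ≤ R)
    {x : EuclideanSpace ℝ (Fin n)} (hx : x ∈ A) {δ : ℝ} (hδ : 0 < δ)
    (hfar : δ / 2 < infDist x B) :
    (δ * r / (8 * R)) ^ (n + 1) * volume.real (ball (0 : EuclideanSpace ℝ (Fin n)) 1) ≤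
        tildeDistSq n A B ∧
      (δ * r / (8 * R)) ^ (n + 1) * volume.real (ball (0 : EuclideanSpace ℝ (Fin n)) 1) ≤
        tildeDistSq n B A := by
  obtain ⟨y, hsub, hle⟩ :=
    exists_closedBall_subset_symmDiff_le_infDist_frontier hA hB hr hrR hx hδ hfar
  have hR : 0 < R := (norm_nonneg x).trans_lt (mem_ball_zero_iff.1 (hA.2 hx))
  have hρ : 0 ≤ δ * r / (8 * R) := by positivity
  have hb : IsBounded (A ∆ B) :=
    isBounded_ball.subset (symmDiff_subset_union.trans (union_subset hA.2 hB))
  exact ⟨pow_succ_mul_le_tildeDistSq (symmDiff_comm A B ▸ hb) hρ (symmDiff_comm A B ▸ hsub)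
      fun z hz => (hle z hz).2,
    pow_succ_mul_le_tildeDistSq hb hρ hsub fun z hz => (hle z hz).1⟩

theorem statement0_general (n : ℕ) (r R : ℝ) (hr : 0 < r) (hrR : r < R) :
    ∃ K₁ : ℝ, 0 < K₁ ∧ ∀ E₁ E₂ : Set (EuclideanSpace ℝ (Fin n)),
      SrR n r R E₁ → SrR n r R E₂ →
      hausdorffDist E₁ E₂ ^ (n + 1) ≤ K₁ * tildeDistSq n E₁ E₂ ∧
      hausdorffDist E₁ E₂ ^ (n + 1) ≤ K₁ * tildeDistSq n E₂ E₁ := by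
  set ω := volume.real (ball (0 : EuclideanSpace ℝ (Fin n)) 1)
  have hω : 0 < ω := ENNReal.toReal_pos (measure_ball_pos _ _ one_pos).ne' measure_ball_lt_top.ne
  have hc : 0 < (r / (8 * R)) ^ (n + 1) * ω := by have := hr.trans hrR; positivity
  refine ⟨((r / (8 * R)) ^ (n + 1) * ω)⁻¹, inv_pos.2 hc, fun E₁ E₂ h₁ h₂ => ?_⟩
  set δ := hausdorffDist E₁ E₂
  have scale : ∀ I, (δ * r / (8 * R)) ^ (n + 1) * ω ≤ I →
      δ ^ (n + 1) ≤ ((r / (8 * R)) ^ (n + 1) * ω)⁻¹ * I := fun I hI =>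
    (le_inv_mul_iff₀ hc).2 (le_of_eq_of_le (by ring) hI)
  rcases (hausdorffDist_nonneg : 0 ≤ δ).eq_or_lt with hδ | hδ
  · have hK := (inv_pos.2 hc).le
    rw [show δ = 0 from hδ.symm, zero_pow n.succ_ne_zero]
    exact ⟨mul_nonneg hK (integral_nonneg fun _ => infDist_nonneg),
      mul_nonneg hK (integral_nonneg fun _ => infDist_nonneg)⟩
  rcases exists_lt_infDist_of_lt_hausdorffDist (by positivity) (half_lt_self hδ) with
    ⟨x, hx, hfar⟩ | ⟨x, hx, hfar⟩
  · exact (pow_succ_mul_le_tildeDistSq_of_lt_infDist h₁ h₂.2 hr hrR.le hx hδ hfar).imp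
      (scale _) (scale _)
  · exact (pow_succ_mul_le_tildeDistSq_of_lt_infDist h₂ h₁.2 hr hrR.le hx hδ hfar).symm.imp
      (scale _) (scale _)

/-- For `n ≥ 2` and `0 < r < R` there is a constant `K₁ = K₁(n,r,R) > 0` such that for all
`E₁, E₂ ∈ S_{r,R}`, `d_H(E₁,E₂)^{n+1} ≤ K₁ d̃²(E₁,E₂)` and
`d_H(E₁,E₂)^{n+1} ≤ K₁ d̃²(E₂,E₁)`. -/
theorem statement0 (n : ℕ) (hn : 2 ≤ n) (r R : ℝ) (hr : 0 < r) (hrR : r < R) :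
    ∃ K₁ : ℝ, 0 < K₁ ∧ ∀ E₁ E₂ : Set (EuclideanSpace ℝ (Fin n)),
      SrR n r R E₁ → SrR n r R E₂ →
      hausdorffDist E₁ E₂ ^ (n + 1) ≤ K₁ * tildeDistSq n E₁ E₂ ∧
      hausdorffDist E₁ E₂ ^ (n + 1) ≤ K₁ * tildeDistSq n E₂ E₁ :=
  statement0_general n r R hr hrR
end
end

section
/- Let n ≥ 2 and 0 < r < R, and let E ∈ S_{r,R}. There exist constants ε₀ = ε₀(n,r,R) > 0 and η₁ = η₁(n,r,R) > 0 such that for all ε ∈ (0,ε₀] and all x ∈ ∂E one has η₁ ε^n ≤ min{ |B_ε(x) \ E| , |E ∩ B_ε(x)| }, where |·| denotes Lebesgue measure. -/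
open MeasureTheory Metric Set
open scoped ENNReal

noncomputable section

/-!
Scaling `B_r(0)` towards a point `x` of `E` by the factor `s` gives the ball
`B_{sr}((1 - s) x) ⊆ E`, and by openness this persists for `x ∈ ∂E`. Applied the other way
round, a point of `E` in `B_{sr}((1 + s) x)` would put `x` itself in `E`, so that ball misses
`E`. Both balls lie in `B_ε(x)` once `s (r + R) ≤ ε`, and each has volume `(sr)^n |B_1|`.
-/

section StarConvexBall

variable {V : Type*} [NormedAddCommGroup V] [NormedSpace ℝ V] {Ω : Set V} {r s : ℝ}

theorem ball_one_sub_smul_subset_s1 (hΩ : ∀ y ∈ ball (0 : V) r, StarConvex ℝ y Ω)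
    (hs : 0 < s) (hs1 : s ≤ 1) {x : V} (hx : x ∈ Ω) : ball ((1 - s) • x) (s * r) ⊆ Ω := by
  intro w hw
  set y := s⁻¹ • (w - (1 - s) • x)
  have hy : y ∈ ball (0 : V) r := by
    rw [mem_ball_zero_iff, norm_smul, Real.norm_eq_abs, abs_inv, abs_of_pos hs,
      inv_mul_lt_iff₀ hs, ← dist_eq_norm]
    exact hw
  have hw_eq : s • y + (1 - s) • x = w := by
    simp only [y, smul_smul, mul_inv_cancel₀ hs.ne', one_smul, sub_add_cancel]
  exact hw_eq ▸ hΩ y hy hx hs.le (by linarith) (by ring)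

theorem ball_one_sub_smul_subset_of_mem_closure (hΩ : ∀ y ∈ ball (0 : V) r, StarConvex ℝ y Ω)
    (hs : 0 < s) (hs1 : s ≤ 1) {x : V} (hx : x ∈ closure Ω) :
    ball ((1 - s) • x) (s * r) ⊆ Ω := by
  intro w hw
  have hopen : IsOpen {x' : V | w ∈ ball ((1 - s) • x') (s * r)} :=
    isOpen_lt (continuous_const.dist (continuous_const.smul continuous_id)) continuous_const
  obtain ⟨x', hx'w, hx'Ω⟩ := mem_closure_iff.1 hx _ hopen hw
  exact ball_one_sub_smul_subset_s1 hΩ hs hs1 hx'Ω hx'w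

theorem disjoint_ball_one_add_smul (hΩ : ∀ y ∈ ball (0 : V) r, StarConvex ℝ y Ω)
    (hs : 0 < s) {x : V} (hx : x ∉ Ω) : Disjoint (ball ((1 + s) • x) (s * r)) Ω := by
  refine Set.disjoint_left.2 fun w hw hwΩ => hx ?_
  have hs' : 0 < 1 + s := by linarith
  -- With `t = s / (1 + s)`, the point `x` lies in `B_{tr}((1 - t) w)`, which is inside `Ω`.
  refine ball_one_sub_smul_subset_s1 hΩ (div_pos hs hs') ((div_le_one hs').2 (by linarith)) hwΩ ?_
  have hx_eq : x - (1 - s / (1 + s)) • w = (1 + s)⁻¹ • ((1 + s) • x - w) := by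
    rw [smul_sub, smul_smul, inv_mul_cancel₀ hs'.ne', one_smul, one_sub_div hs'.ne',
      add_sub_cancel_right, one_div]
  rw [mem_ball, dist_eq_norm, hx_eq, norm_smul, Real.norm_eq_abs, abs_inv, abs_of_pos hs',
    ← dist_eq_norm, dist_comm, div_mul_eq_mul_div, inv_mul_lt_iff₀ hs', mul_div_cancel₀ _ hs'.ne']
  exact hw

theorem ball_one_add_smul_subset_ball {x : V} {t ρ ε : ℝ} (h : ρ + |t| * ‖x‖ ≤ ε) :
    ball ((1 + t) • x) ρ ⊆ ball x ε := by
  refine ball_subset_ball' ?_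
  rwa [dist_eq_norm, add_smul, one_smul, add_sub_cancel_left, norm_smul, Real.norm_eq_abs]

end StarConvexBall

theorem mul_measure_ball_le_measure {V : Type*} [NormedAddCommGroup V] [NormedSpace ℝ V]
    [MeasurableSpace V] [BorelSpace V] [FiniteDimensional ℝ V] (μ : Measure V) [μ.IsAddHaarMeasure]
    {c : V} {ρ : ℝ} (hρ : 0 < ρ) {S : Set V} (hcS : ball c ρ ⊆ S) (hS : μ S ≠ ∞) :
    ρ ^ Module.finrank ℝ V * (μ (ball 0 1)).toReal ≤ (μ S).toReal := by
  have := ENNReal.toReal_mono hS (measure_mono (μ := μ) hcS)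
  rwa [Measure.addHaar_ball_of_pos μ c hρ, ENNReal.toReal_mul,
    ENNReal.toReal_ofReal (by positivity)] at this

theorem statement1_general (n : ℕ) (r R : ℝ) (hr : 0 < r) (hrR : r < R) :
    ∃ ε₀ η₁ : ℝ, 0 < ε₀ ∧ 0 < η₁ ∧
      ∀ E : Set (EuclideanSpace ℝ (Fin n)), SrR n r R E →
        ∀ ε : ℝ, 0 < ε → ε ≤ ε₀ → ∀ x ∈ frontier E,
          η₁ * ε ^ n ≤
            min (volume (ball x ε \ E)).toReal (volume (E ∩ ball x ε)).toReal := by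
  have hRr : 0 < R + r := by linarith
  have hω : 0 < (volume (ball (0 : EuclideanSpace ℝ (Fin n)) 1)).toReal :=
    ENNReal.toReal_pos (measure_ball_pos _ _ one_pos).ne' measure_ball_lt_top.ne
  refine ⟨R + r, (r / (R + r)) ^ n * (volume (ball (0 : EuclideanSpace ℝ (Fin n)) 1)).toReal,
    hRr, by positivity, ?_⟩
  rintro E ⟨⟨hEopen, -, hEstar⟩, hER⟩ ε hε hεle x hx
  have hstar : ∀ y ∈ ball 0 r, StarConvex ℝ y E := fun y hy =>
    starConvex_iff_segment_subset.2 (hEstar y hy)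
  set s := ε / (R + r)
  have hs : 0 < s := by positivity
  have hs1 : s ≤ 1 := (div_le_one hRr).2 hεle
  have hxR : ‖x‖ ≤ R := by
    simpa using closure_ball_subset_closedBall (closure_mono hER (frontier_subset_closure hx))
  have hrad : s * r + |s| * ‖x‖ ≤ ε := by
    calc s * r + |s| * ‖x‖ ≤ s * (R + r) := by rw [abs_of_pos hs]; nlinarith
      _ = ε := div_mul_cancel₀ _ hRr.ne'
  have hvol : ∀ c, ∀ S ⊆ ball x ε, ball c (s * r) ⊆ S →
      (s * r) ^ n * (volume (ball (0 : EuclideanSpace ℝ (Fin n)) 1)).toReal ≤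
        (volume S).toReal := fun c S hSx hcS => by
    simpa using mul_measure_ball_le_measure volume (mul_pos hs hr) hcS
      ((measure_mono hSx).trans_lt measure_ball_lt_top).ne
  rw [mul_right_comm, ← mul_pow, div_mul_comm]
  refine le_min (hvol ((1 + s) • x) _ sdiff_subset (subset_sdiff.2 ⟨?_, ?_⟩))
    (hvol ((1 - s) • x) _ inter_subset_right (subset_inter ?_ ?_))
  · exact ball_one_add_smul_subset_ball hrad
  · exact disjoint_ball_one_add_smul hstar hs (hEopen.frontier_eq ▸ hx).2
  · exact ball_one_sub_smul_subset_of_mem_closure hstar hs hs1 (frontier_subset_closure hx)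
  · rw [sub_eq_add_neg]
    exact ball_one_add_smul_subset_ball (by rwa [abs_neg])

/-- Density estimate: for `n ≥ 2` and `0 < r < R` there are constants
`ε₀ = ε₀(n,r,R) > 0` and `η₁ = η₁(n,r,R) > 0` such that for every `E ∈ S_{r,R}`,
every `ε ∈ (0,ε₀]` and every `x ∈ ∂E`,
`η₁ ε^n ≤ min { |B_ε(x) \ E| , |E ∩ B_ε(x)| }`. -/
theorem statement1 (n : ℕ) (hn : 2 ≤ n) (r R : ℝ) (hr : 0 < r) (hrR : r < R) :
    ∃ ε₀ η₁ : ℝ, 0 < ε₀ ∧ 0 < η₁ ∧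
      ∀ E : Set (EuclideanSpace ℝ (Fin n)), SrR n r R E →
        ∀ ε : ℝ, 0 < ε → ε ≤ ε₀ → ∀ x ∈ frontier E,
          η₁ * ε ^ n ≤
            min (volume (ball x ε \ E)).toReal (volume (E ∩ ball x ε)).toReal :=
  statement1_general n r R hr hrR
end
end

section
/- Let n ≥ 2 and 0 < r < R, and let E ∈ S_{r,R}. There exist constants ε₀ = ε₀(n,r,R) > 0 and η₂, η₃ > 0 depending only on n, r, R such that for all ε ∈ (0,ε₀] and all x ∈ ∂E one has η₃ ε^{n−1} ≤ H^{n−1}(∂E ∩ B_ε(x)) ≤ η₂ ε^{n−1}, where H^{n−1} denotes (n−1)-dimensional Hausdorff measure. -/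
/-!
Write `m = n - 1`. Since `E` is star-shaped with respect to `B_r(0)` and lies in `B_R(0)`, its
boundary satisfies a uniform cone condition: if `z₁, z₂ ∈ ∂E` are close to `x` and `z₂ - z₁` is
almost parallel to `x`, then one of them lies strictly inside the cone spanned by `B_r(0)` and the
other, hence in `E`. So on `∂E ∩ B_ε(x)` the orthogonal projection onto `x⊥ ≅ ℝ^m`, which is
1-Lipschitz, has an inverse with Lipschitz constant `8R²/r²`; this gives the upper bound. For the
lower bound, each line parallel to `x` through a point of `x⊥` at distance `< rε/(2R)` from the
origin passes from `E` to its complement inside `B_ε(x)`, so the projection of `∂E ∩ B_ε(x)` covers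
an `m`-ball of radius `rε/(2R)`. Finally `μH[m]` is an additive Haar measure on `ℝ^m`, so it
scales balls by `ε^m`.
-/

open MeasureTheory Metric Set
open scoped ENNReal

noncomputable section

open Module
open scoped NNReal RealInnerProductSpace

theorem IsPreconnected.inter_frontier_nonempty {X : Type*} [TopologicalSpace X] {s t : Set X}
    (hs : IsPreconnected s) (hst : (s ∩ t).Nonempty) (hst' : (s \ t).Nonempty) :
    (s ∩ frontier t).Nonempty := by
  by_contra h
  rw [not_nonempty_iff_eq_empty] at h
  have hcover : s ⊆ interior t ∪ (closure t)ᶜ := by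
    intro z hz
    have hzf : z ∉ frontier t := fun hf => h.subset ⟨hz, hf⟩
    by_cases hzt : z ∈ t
    · exact Or.inl (mem_interior_iff_notMem_frontier hzt |>.2 hzf)
    · exact Or.inr fun hzc => hzf ⟨hzc, fun hzi => hzt (interior_subset hzi)⟩
  obtain ⟨a, has, hat⟩ := hst
  obtain ⟨b, hbs, hbt⟩ := hst'
  have ha : a ∈ interior t := (hcover has).resolve_right fun hac => hac (subset_closure hat)
  have hb : b ∈ (closure t)ᶜ := (hcover hbs).resolve_left fun hbi => hbt (interior_subset hbi)
  obtain ⟨z, -, hzi, hzc⟩ := hs _ _ isOpen_interior isClosed_closure.isOpen_compl hcover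
    ⟨a, has, ha⟩ ⟨b, hbs, hb⟩
  exact hzc (interior_subset_closure hzi)

section StarConvex

variable {V : Type*} [NormedAddCommGroup V] [NormedSpace ℝ V] {U E : Set V}

theorem combo_mem_of_forall_starConvex (hU : IsOpen U) (hE : ∀ y ∈ U, StarConvex ℝ y E)
    {y x : V} (hy : y ∈ U) (hx : x ∈ closure E) {a b : ℝ} (ha : 0 < a) (hb : 0 ≤ b)
    (hab : a + b = 1) : a • y + b • x ∈ E := by
  obtain ⟨ρ, hρ, hball⟩ := Metric.isOpen_iff.1 hU y hy
  obtain ⟨x', hx'E, hxx'⟩ := Metric.mem_closure_iff.1 hx (a * ρ) (mul_pos ha hρ)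
  have hy' : y + (b / a) • (x - x') ∈ U := by
    refine hball ?_
    rw [mem_ball, dist_self_add_left, norm_smul, Real.norm_of_nonneg (by positivity),
      ← dist_eq_norm, div_mul_eq_mul_div, div_lt_iff₀ ha]
    nlinarith [dist_nonneg (x := x) (y := x')]
  convert hE _ hy' hx'E ha.le hb hab using 1
  rw [smul_add, smul_smul, mul_div_cancel₀ _ ha.ne']
  module

theorem exists_smul_add_mem_frontier (hE : IsOpen E) {r : ℝ}
    (hstar : ∀ y ∈ ball (0 : V) r, StarConvex ℝ y E) {x v : V} (hx : x ∈ frontier E)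
    {τ : ℝ} (hτ0 : 0 < τ) (hτ1 : τ ≤ 1) (hv : ‖v‖ < r * τ) :
    ∃ σ ∈ Icc (-τ) τ, (1 + σ) • x + v ∈ frontier E := by
  rw [hE.frontier_eq] at hx
  have hvτ : ‖τ⁻¹ • v‖ < r := by
    rw [norm_smul, Real.norm_of_nonneg (by positivity), inv_mul_lt_iff₀ hτ0, mul_comm]
    exact hv
  have hlow : (1 - τ) • x + v ∈ E := by
    convert combo_mem_of_forall_starConvex isOpen_ball hstar (mem_ball_zero_iff.2 hvτ) hx.1
      hτ0 (sub_nonneg.2 hτ1) (add_sub_cancel τ 1) using 1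
    rw [smul_smul, mul_inv_cancel₀ hτ0.ne', one_smul, add_comm]
  have hhigh : (1 + τ) • x + v ∉ E := by
    intro h
    refine hx.2 ?_
    -- `x` lies on the segment from `-τ⁻¹ • v ∈ B_r(0)` to `(1 + τ) • x + v`
    have hy : -(τ⁻¹ • v) ∈ ball (0 : V) r := by rwa [mem_ball_zero_iff, norm_neg]
    convert hstar _ hy h (a := τ / (1 + τ)) (b := 1 / (1 + τ)) (by positivity) (by positivity)
      (by field_simp; ring) using 1
    match_scalars
    · field_simp
    · field_simp; ring
  have hτ : -τ ≤ τ := by linarith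
  obtain ⟨_, ⟨σ, hσ, rfl⟩, hfr⟩ := (isPreconnected_Icc.image (fun σ : ℝ => (1 + σ) • x + v)
    (by fun_prop)).inter_frontier_nonempty (t := E)
    ⟨_, mem_image_of_mem _ (left_mem_Icc.2 hτ), by rwa [sub_eq_add_neg] at hlow⟩
    ⟨_, mem_image_of_mem _ (right_mem_Icc.2 hτ), hhigh⟩
  exact ⟨σ, hσ, hfr⟩

end StarConvex

section Cone

variable {V : Type*} [NormedAddCommGroup V] [InnerProductSpace ℝ V] {E : Set V} {r R : ℝ}

theorem inner_sub_le_of_notMem (hstar : ∀ y ∈ ball (0 : V) r, StarConvex ℝ y E)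
    {x z₁ z₂ : V} (hxR : ‖x‖ ≤ R) (h₁ : z₁ ∉ E) (h₂ : z₂ ∈ closure E)
    (hz₁ : dist z₁ x < r / 2) :
    ⟪z₂ - z₁, x⟫ ≤ (1 - r ^ 2 / (8 * R ^ 2)) * (‖z₂ - z₁‖ * ‖x‖) := by
  set δ := r ^ 2 / (8 * R ^ 2)
  have hδ0 : 0 ≤ δ := by positivity
  by_contra! hlt
  set w := z₂ - z₁
  have hw : 0 < ‖w‖ := norm_pos_iff.2 fun h => by simp [h] at hlt
  have hx : 0 < ‖x‖ := norm_pos_iff.2 fun h => by simp [h] at hlt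
  have hR : 0 < R := hx.trans_le hxR
  set κ := ‖x‖ / ‖w‖
  have hκ : κ * ‖w‖ = ‖x‖ := div_mul_cancel₀ _ hw.ne'
  have hκ0 : 0 < κ := by positivity
  clear_value κ
  -- `κ • w` is a vector of length `‖x‖` making a small angle with `x`
  have hxκw : ‖x - κ • w‖ < r / 2 := by
    have hδx : δ * ‖x‖ ^ 2 ≤ r ^ 2 / 8 := by
      calc δ * ‖x‖ ^ 2 ≤ δ * R ^ 2 := by gcongr
        _ = r ^ 2 / 8 := by simp only [δ]; field_simp
    have hinner : κ * ((1 - δ) * (‖w‖ * ‖x‖)) < κ * ⟪w, x⟫ := mul_lt_mul_of_pos_left hlt hκ0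
    have hκx : κ * ((1 - δ) * (‖w‖ * ‖x‖)) = (1 - δ) * ‖x‖ ^ 2 := by rw [← hκ]; ring
    refine lt_of_pow_lt_pow_left₀ 2 (dist_nonneg.trans_lt hz₁).le ?_
    rw [norm_sub_sq_real, real_inner_smul_right, norm_smul, Real.norm_of_nonneg hκ0.le, hκ,
      real_inner_comm]
    nlinarith
  have hy : z₁ - κ • w ∈ ball (0 : V) r := by
    rw [mem_ball_zero_iff]
    calc ‖z₁ - κ • w‖ = ‖(z₁ - x) + (x - κ • w)‖ := by congr 1; abel
      _ ≤ ‖z₁ - x‖ + ‖x - κ • w‖ := norm_add_le _ _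
      _ < r / 2 + r / 2 := add_lt_add_of_lt_of_lt (by rwa [← dist_eq_norm]) hxκw
      _ = r := add_halves r
  have h1κ : 1 + κ ≠ 0 := by positivity
  refine h₁ ?_
  -- `z₁` lies on the segment from `z₁ - κ • w ∈ B_r(0)` to `z₂ = z₁ + w`
  convert combo_mem_of_forall_starConvex isOpen_ball hstar hy h₂ (a := 1 / (1 + κ))
    (b := κ / (1 + κ)) (by positivity) (by positivity) (by field_simp) using 1
  simp only [w]
  match_scalars <;> field_simp <;> ring

theorem abs_inner_sub_le_of_mem_frontier (hE : IsOpen E)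
    (hstar : ∀ y ∈ ball (0 : V) r, StarConvex ℝ y E) {x z₁ z₂ : V} (hxR : ‖x‖ ≤ R)
    (h₁ : z₁ ∈ frontier E) (h₂ : z₂ ∈ frontier E) (hz₁ : dist z₁ x < r / 2)
    (hz₂ : dist z₂ x < r / 2) :
    |⟪z₂ - z₁, x⟫| ≤ (1 - r ^ 2 / (8 * R ^ 2)) * (‖z₂ - z₁‖ * ‖x‖) := by
  rw [hE.frontier_eq] at h₁ h₂
  refine abs_le.2 ⟨?_, inner_sub_le_of_notMem hstar hxR h₁.2 h₂.1 hz₁⟩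
  have := inner_sub_le_of_notMem hstar hxR h₂.2 h₁.1 hz₂
  rw [← neg_sub, inner_neg_left, norm_neg] at this
  linarith

end Cone

section HyperplaneCoord

variable {V : Type*} [NormedAddCommGroup V] [InnerProductSpace ℝ V] (m : ℕ)
  [Fact (finrank ℝ V = m + 1)] {x : V}

def hyperplaneCoord (hx : x ≠ 0) : V →L[ℝ] EuclideanSpace ℝ (Fin m) :=
  (OrthonormalBasis.fromOrthogonalSpanSingleton (𝕜 := ℝ) m hx).repr.toContinuousLinearEquiv ∘L
    (ℝ ∙ x)ᗮ.orthogonalProjectionOnto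

variable {m}

theorem norm_hyperplaneCoord_sq (hx : x ≠ 0) (u : V) :
    ‖hyperplaneCoord m hx u‖ ^ 2 = ‖u‖ ^ 2 - (⟪x, u⟫ / ‖x‖) ^ 2 := by
  have hproj : ‖hyperplaneCoord m hx u‖ = ‖(ℝ ∙ x)ᗮ.starProjection u‖ := by
    rw [hyperplaneCoord, ContinuousLinearMap.comp_apply, Submodule.starProjection_apply]
    simp only [ContinuousLinearEquiv.coe_coe, LinearIsometryEquiv.coe_toContinuousLinearEquiv,
      LinearIsometryEquiv.norm_map, Submodule.coe_norm]
  have hline : ‖(ℝ ∙ x).starProjection u‖ = |⟪x, u⟫ / ‖x‖| := by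
    have : ‖x‖ ≠ 0 := norm_ne_zero_iff.2 hx
    rw [Submodule.starProjection_singleton, norm_smul, Real.norm_eq_abs, abs_div, abs_div,
      abs_norm]
    simp only [RCLike.ofReal_real_eq_id, id_eq, abs_pow, abs_norm]
    field_simp
  rw [hproj, (ℝ ∙ x).norm_sq_eq_add_norm_sq_starProjection u, hline, sq_abs]
  ring

theorem norm_hyperplaneCoord_le (hx : x ≠ 0) (u : V) : ‖hyperplaneCoord m hx u‖ ≤ ‖u‖ := by
  refine (pow_le_pow_iff_left₀ (norm_nonneg _) (norm_nonneg _) two_ne_zero).1 ?_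
  rw [norm_hyperplaneCoord_sq]
  nlinarith [sq_nonneg (⟪x, u⟫ / ‖x‖)]

theorem lipschitzWith_hyperplaneCoord (hx : x ≠ 0) : LipschitzWith 1 (hyperplaneCoord m hx) :=
  LipschitzWith.of_dist_le_mul fun u w => by
    simpa [dist_eq_norm, ← map_sub] using norm_hyperplaneCoord_le hx (u - w)

theorem mul_norm_le_norm_hyperplaneCoord (hx : x ≠ 0) {δ : ℝ} (hδ0 : 0 ≤ δ) (hδ1 : δ ≤ 1)
    {u : V} (hu : |⟪u, x⟫| ≤ (1 - δ) * (‖u‖ * ‖x‖)) : δ * ‖u‖ ≤ ‖hyperplaneCoord m hx u‖ := by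
  have hx' : 0 < ‖x‖ := norm_pos_iff.2 hx
  have hcomp : |⟪x, u⟫ / ‖x‖| ≤ (1 - δ) * ‖u‖ := by
    rw [abs_div, abs_norm, div_le_iff₀ hx', real_inner_comm, mul_assoc]
    exact hu
  have hsq : (⟪x, u⟫ / ‖x‖) ^ 2 ≤ ((1 - δ) * ‖u‖) ^ 2 := by
    rw [← sq_abs]
    exact pow_le_pow_left₀ (abs_nonneg _) hcomp 2
  refine (pow_le_pow_iff_left₀ (by positivity) (norm_nonneg _) two_ne_zero).1 ?_
  rw [norm_hyperplaneCoord_sq]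
  nlinarith [mul_nonneg hδ0 (sub_nonneg.2 hδ1), sq_nonneg ‖u‖]

theorem hyperplaneCoord_self (hx : x ≠ 0) : hyperplaneCoord m hx x = 0 := by
  simp [hyperplaneCoord, Submodule.orthogonalProjectionOnto_orthogonalComplement_singleton_eq_zero]

theorem exists_hyperplaneCoord_eq (hx : x ≠ 0) (v' : EuclideanSpace ℝ (Fin m)) :
    ∃ v : V, ⟪x, v⟫ = 0 ∧ ‖v‖ = ‖v'‖ ∧ hyperplaneCoord m hx v = v' := by
  set B := OrthonormalBasis.fromOrthogonalSpanSingleton (𝕜 := ℝ) m hx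
  refine ⟨B.repr.symm v', Submodule.mem_orthogonal_singleton_iff_inner_right.1 (B.repr.symm v').2,
    by rw [Submodule.norm_coe, LinearIsometryEquiv.norm_map], ?_⟩
  simp only [hyperplaneCoord, ContinuousLinearMap.comp_apply,
    Submodule.orthogonalProjectionOnto_mem_subspace_eq_self, ContinuousLinearEquiv.coe_coe,
    LinearIsometryEquiv.coe_toContinuousLinearEquiv, LinearIsometryEquiv.apply_symm_apply, B]

end HyperplaneCoord

theorem hausdorffMeasure_le_of_antilipschitzWith_domRestrict {X Y : Type*} [EMetricSpace X]
    [EMetricSpace Y] [MeasurableSpace X] [BorelSpace X] [MeasurableSpace Y] [BorelSpace Y]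
    {f : X → Y} {s : Set X} {K : ℝ≥0} (hf : AntilipschitzWith K (s.domRestrict f)) {d : ℝ}
    (hd : 0 ≤ d) : μH[d] s ≤ (K : ℝ≥0∞) ^ d * μH[d] (f '' s) :=
  calc μH[d] s = μH[d] (((↑) : s → X) '' univ) := by rw [image_univ, Subtype.range_coe]
    _ = μH[d] (univ : Set s) := isometry_subtype_coe.hausdorffMeasure_image (Or.inl hd) _
    _ ≤ (K : ℝ≥0∞) ^ d * μH[d] (s.domRestrict f '' univ) := hf.le_hausdorffMeasure_image hd _
    _ = (K : ℝ≥0∞) ^ d * μH[d] (f '' s) := by rw [image_univ, range_domRestrict]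

section LocalEstimates

variable {V : Type*} [NormedAddCommGroup V] [InnerProductSpace ℝ V] {m : ℕ}
  [Fact (finrank ℝ V = m + 1)] {E : Set V} {r R ε : ℝ} {x : V}

theorem le_norm_of_mem_frontier (hE : IsOpen E) (hstar : ∀ y ∈ ball (0 : V) r, StarConvex ℝ y E)
    (hx : x ∈ frontier E) : r ≤ ‖x‖ := by
  rw [hE.frontier_eq] at hx
  by_contra! h
  exact hx.2 ((hstar x (mem_ball_zero_iff.2 h)).mem (closure_nonempty_iff.1 ⟨x, hx.1⟩))

theorem antilipschitzWith_domRestrict_hyperplaneCoord (hE : IsOpen E)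
    (hstar : ∀ y ∈ ball (0 : V) r, StarConvex ℝ y E) (hr : 0 < r) (hrR : r ≤ R) (hx : x ≠ 0)
    (hxR : ‖x‖ ≤ R) (hε : ε ≤ r / 2) :
    AntilipschitzWith (8 * R ^ 2 / r ^ 2).toNNReal
      ((frontier E ∩ ball x ε).domRestrict (hyperplaneCoord m hx)) := by
  have hR : 0 < R := hr.trans_le hrR
  have hδ0 : 0 < r ^ 2 / (8 * R ^ 2) := by positivity
  have hδ1 : r ^ 2 / (8 * R ^ 2) ≤ 1 := by
    rw [div_le_one (by positivity)]
    nlinarith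
  refine AntilipschitzWith.of_le_mul_dist fun ⟨z₁, h₁, hz₁⟩ ⟨z₂, h₂, hz₂⟩ => ?_
  have hcone := abs_inner_sub_le_of_mem_frontier hE hstar hxR h₁ h₂
    ((mem_ball.1 hz₁).trans_le hε) ((mem_ball.1 hz₂).trans_le hε)
  have := mul_norm_le_norm_hyperplaneCoord (m := m) hx hδ0.le hδ1 hcone
  rw [Subtype.dist_eq, dist_comm, dist_eq_norm, dist_comm, dist_eq_norm, domRestrict_apply,
    domRestrict_apply, ← map_sub, Real.coe_toNNReal _ (by positivity)]
  calc ‖z₂ - z₁‖ = (r ^ 2 / (8 * R ^ 2))⁻¹ * (r ^ 2 / (8 * R ^ 2) * ‖z₂ - z₁‖) := by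
        field_simp
    _ ≤ 8 * R ^ 2 / r ^ 2 * ‖hyperplaneCoord m hx (z₂ - z₁)‖ := by
        rw [inv_div]; gcongr

theorem ball_subset_image_hyperplaneCoord (hE : IsOpen E)
    (hstar : ∀ y ∈ ball (0 : V) r, StarConvex ℝ y E) (hrR : r ≤ R) (hx : x ∈ frontier E)
    (hx0 : x ≠ 0) (hxR : ‖x‖ ≤ R) (hε0 : 0 < ε) (hε : ε ≤ 2 * r) :
    ball 0 (r / (2 * R) * ε) ⊆ hyperplaneCoord m hx0 '' (frontier E ∩ ball x ε) := by
  intro v' hv'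
  rw [mem_ball_zero_iff] at hv'
  obtain ⟨v, hvx, hvv', hQv⟩ := exists_hyperplaneCoord_eq hx0 v'
  have hrx := le_norm_of_mem_frontier hE hstar hx
  have hx' : 0 < ‖x‖ := norm_pos_iff.2 hx0
  have hr : 0 < r := by linarith
  have hR : 0 < R := hx'.trans_le hxR
  set τ := ε / (2 * ‖x‖)
  have hτ0 : 0 < τ := by positivity
  have hτ1 : τ ≤ 1 := by rw [div_le_one (by positivity)]; linarith
  have hv : ‖v‖ < r * τ := by
    rw [hvv']
    refine hv'.trans_le ?_
    simp only [τ]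
    rw [div_mul_eq_mul_div, mul_div_assoc']
    gcongr
  have hvε : ‖v‖ < ε / 2 := by
    rw [hvv']
    refine hv'.trans_le ?_
    rw [div_mul_eq_mul_div, div_le_div_iff₀ (by positivity) (by norm_num)]
    nlinarith
  obtain ⟨σ, hσ, hz⟩ := exists_smul_add_mem_frontier hE hstar hx hτ0 hτ1 hv
  refine ⟨_, ⟨hz, ?_⟩, ?_⟩
  · rw [mem_ball, dist_eq_norm, show (1 + σ) • x + v - x = σ • x + v by module]
    refine lt_of_pow_lt_pow_left₀ 2 hε0.le ?_
    rw [norm_add_sq_real, real_inner_smul_left, hvx, norm_smul, Real.norm_eq_abs, mul_pow,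
      sq_abs]
    have hσx : σ ^ 2 * ‖x‖ ^ 2 ≤ (ε / 2) ^ 2 := by
      have hστ : |σ| * ‖x‖ ≤ τ * ‖x‖ := by gcongr; exact abs_le.2 hσ
      rw [← mul_pow, ← sq_abs, abs_mul, abs_norm]
      refine pow_le_pow_left₀ (by positivity) (hστ.trans_eq ?_) 2
      simp only [τ]
      field_simp
    nlinarith [pow_lt_pow_left₀ hvε (norm_nonneg v) two_ne_zero]
  · rw [map_add, map_smul, hyperplaneCoord_self, smul_zero, zero_add, hQv]

theorem hausdorffMeasure_frontier_inter_ball_le [MeasurableSpace V] [BorelSpace V]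
    (hE : IsOpen E) (hstar : ∀ y ∈ ball (0 : V) r, StarConvex ℝ y E) (hr : 0 < r) (hrR : r ≤ R)
    (hx : x ∈ frontier E) (hxR : ‖x‖ ≤ R) (hε0 : 0 < ε) (hε : ε ≤ r / 2) :
    μH[m] (frontier E ∩ ball x ε) ≤
      ENNReal.ofReal ((8 * R ^ 2 / r ^ 2 * ε) ^ m) *
        μH[m] (ball (0 : EuclideanSpace ℝ (Fin m)) 1) := by
  have hx0 : x ≠ 0 := norm_pos_iff.1 (hr.trans_le (le_norm_of_mem_frontier hE hstar hx))
  set Q := hyperplaneCoord m hx0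
  set K := (8 * R ^ 2 / r ^ 2).toNNReal
  have himage : Q '' (frontier E ∩ ball x ε) ⊆ ball (Q x) ε := by
    rw [image_subset_iff]
    intro z hz
    simpa using (lipschitzWith_hyperplaneCoord hx0).mapsTo_ball one_ne_zero x ε hz.2
  calc μH[m] (frontier E ∩ ball x ε)
      ≤ (K : ℝ≥0∞) ^ (m : ℝ) * μH[m] (Q '' (frontier E ∩ ball x ε)) :=
        hausdorffMeasure_le_of_antilipschitzWith_domRestrict
          (antilipschitzWith_domRestrict_hyperplaneCoord hE hstar hr hrR hx0 hxR hε)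
          (Nat.cast_nonneg m)
    _ ≤ (K : ℝ≥0∞) ^ (m : ℝ) * μH[m] (ball (Q x) ε) := by gcongr
    _ = _ := by
        rw [Measure.addHaar_ball_of_pos _ _ hε0, finrank_euclideanSpace_fin, ENNReal.rpow_natCast,
          ← mul_assoc, mul_pow, ENNReal.ofReal_mul (by positivity), ENNReal.ofReal_pow hε0.le,
          ENNReal.ofReal_pow (by positivity : (0 : ℝ) ≤ 8 * R ^ 2 / r ^ 2)]
        rfl

theorem le_hausdorffMeasure_frontier_inter_ball [MeasurableSpace V] [BorelSpace V]
    (hE : IsOpen E) (hstar : ∀ y ∈ ball (0 : V) r, StarConvex ℝ y E) (hr : 0 < r) (hrR : r ≤ R)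
    (hx : x ∈ frontier E) (hxR : ‖x‖ ≤ R) (hε0 : 0 < ε) (hε : ε ≤ 2 * r) :
    ENNReal.ofReal ((r / (2 * R) * ε) ^ m) * μH[m] (ball (0 : EuclideanSpace ℝ (Fin m)) 1) ≤
      μH[m] (frontier E ∩ ball x ε) := by
  have hx0 : x ≠ 0 := norm_pos_iff.1 (hr.trans_le (le_norm_of_mem_frontier hE hstar hx))
  have hR : 0 < R := hr.trans_le hrR
  calc ENNReal.ofReal ((r / (2 * R) * ε) ^ m) * μH[m] (ball (0 : EuclideanSpace ℝ (Fin m)) 1)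
      = μH[m] (ball (0 : EuclideanSpace ℝ (Fin m)) (r / (2 * R) * ε)) := by
        rw [Measure.addHaar_ball_of_pos _ _ (by positivity : 0 < r / (2 * R) * ε),
          finrank_euclideanSpace_fin]
    _ ≤ μH[m] (hyperplaneCoord m hx0 '' (frontier E ∩ ball x ε)) :=
        measure_mono (ball_subset_image_hyperplaneCoord hE hstar hrR hx hx0 hxR hε0 hε)
    _ ≤ μH[m] (frontier E ∩ ball x ε) := by
        simpa using (lipschitzWith_hyperplaneCoord hx0).hausdorffMeasure_image_le
          (Nat.cast_nonneg m) (frontier E ∩ ball x ε)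

end LocalEstimates

/-- Perimeter density estimate: for `n ≥ 2` and `0 < r < R` there are constants
`ε₀ = ε₀(n,r,R) > 0` and `η₂, η₃ > 0` depending only on `n, r, R` such that for every
`E ∈ S_{r,R}`, every `ε ∈ (0,ε₀]` and every `x ∈ ∂E`,
`η₃ ε^{n-1} ≤ H^{n-1}(∂E ∩ B_ε(x)) ≤ η₂ ε^{n-1}`. -/
theorem statement2 (n : ℕ) (hn : 2 ≤ n) (r R : ℝ) (hr : 0 < r) (hrR : r < R) :
    ∃ ε₀ η₂ η₃ : ℝ, 0 < ε₀ ∧ 0 < η₂ ∧ 0 < η₃ ∧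
      ∀ E : Set (EuclideanSpace ℝ (Fin n)), SrR n r R E →
        ∀ ε : ℝ, 0 < ε → ε ≤ ε₀ → ∀ x ∈ frontier E,
          ENNReal.ofReal (η₃ * ε ^ (n - 1)) ≤ μH[(n:ℝ) - 1] (frontier E ∩ ball x ε) ∧
          μH[(n:ℝ) - 1] (frontier E ∩ ball x ε) ≤ ENNReal.ofReal (η₂ * ε ^ (n - 1)) := by
  obtain ⟨m, rfl⟩ : ∃ m, n = m + 1 := ⟨n - 1, by omega⟩
  have : Fact (finrank ℝ (EuclideanSpace ℝ (Fin (m + 1))) = m + 1) :=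
    ⟨finrank_euclideanSpace_fin⟩
  set C := μH[m] (ball (0 : EuclideanSpace ℝ (Fin m)) 1)
  have hCtop : C ≠ ∞ := measure_ball_lt_top.ne
  have hCpos : 0 < C.toReal := ENNReal.toReal_pos (measure_ball_pos _ _ one_pos).ne' hCtop
  have hR : 0 < R := hr.trans hrR
  refine ⟨r / 2, (8 * R ^ 2 / r ^ 2) ^ m * C.toReal, (r / (2 * R)) ^ m * C.toReal, by positivity,
    by positivity, by positivity, ?_⟩
  rintro E ⟨⟨hE, -, hseg⟩, hER⟩ ε hε0 hε x hx
  have hstar : ∀ y ∈ ball 0 r, StarConvex ℝ y E := fun y hy =>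
    starConvex_iff_segment_subset.2 (hseg y hy)
  have hxR : ‖x‖ ≤ R := mem_closedBall_zero_iff.1
    (closure_ball_subset_closedBall (closure_mono hER (frontier_subset_closure hx)))
  have hscale (a : ℝ) (ha : 0 ≤ a) :
      ENNReal.ofReal (a ^ m * C.toReal * ε ^ m) = ENNReal.ofReal ((a * ε) ^ m) * C := by
    rw [mul_right_comm, ← mul_pow, ENNReal.ofReal_mul (by positivity), ENNReal.ofReal_toReal hCtop]
  rw [show ((m + 1 : ℕ) : ℝ) - 1 = m by push_cast; ring, Nat.add_sub_cancel,
    hscale _ (by positivity), hscale _ (by positivity)]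
  exact ⟨le_hausdorffMeasure_frontier_inter_ball hE hstar hr hrR.le hx hxR hε0 (by linarith),
    hausdorffMeasure_frontier_inter_ball_le hE hstar hr hrR.le hx hxR hε0 hε⟩
end
end

section
/- Let n ≥ 2 and 0 < r < R. There exists a constant σ₂ = σ₂(n,r,R) > 0 such that for all sets E, F ∈ S_{r,R} one has ∫_{∂F} dist(x,∂E)² dH^{n−1}(x) ≤ σ₂ · d̃²(F,E), where H^{n−1} is (n−1)-dimensional Hausdorff measure restricted to ∂F. -/
open MeasureTheory Metric Set
open scoped ENNReal symmDiff

noncomputable section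

open scoped NNReal RealInnerProductSpace

namespace St3

variable {n : ℕ} {r R : ℝ} {F : Set (EuclideanSpace ℝ (Fin n))}

lemma ball_subset (hF : StarShaped n r F) (hne : F.Nonempty) :
    ball (0 : EuclideanSpace ℝ (Fin n)) r ⊆ F := by
  obtain ⟨x₀, hx₀⟩ := hne
  intro y hy
  exact hF.2.2 y hy x₀ hx₀ (left_mem_segment ℝ y x₀)

lemma seg_mem (hF : StarShaped n r F) {y w : EuclideanSpace ℝ (Fin n)}
    (hy : y ∈ ball (0 : EuclideanSpace ℝ (Fin n)) r) (hw : w ∈ F) {t : ℝ}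
    (ht0 : 0 ≤ t) (ht1 : t ≤ 1) : (1 - t) • y + t • w ∈ F :=
  hF.2.2 y hy w hw ⟨1 - t, t, by linarith, ht0, by ring, rfl⟩


lemma frontier_not_mem (hF : StarShaped n r F) {z : EuclideanSpace ℝ (Fin n)}
    (hz : z ∈ frontier F) : z ∉ F := by
  rw [hF.1.frontier_eq] at hz; exact hz.2

lemma frontier_norm_lb (hF : StarShaped n r F) {z : EuclideanSpace ℝ (Fin n)}
    (hz : z ∈ frontier F) : r ≤ ‖z‖ := by
  by_contra h
  push_neg at h
  have hne : F.Nonempty := by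
    rcases eq_empty_or_nonempty F with h0 | h0
    · rw [h0] at hz; simp at hz
    · exact h0
  exact frontier_not_mem hF hz (ball_subset hF hne (by simpa [mem_ball, dist_eq_norm] using h))

lemma frontier_norm_ub (hFR : F ⊆ ball (0 : EuclideanSpace ℝ (Fin n)) R)
    {z : EuclideanSpace ℝ (Fin n)} (hz : z ∈ frontier F) : ‖z‖ ≤ R := by
  have : z ∈ closedBall (0 : EuclideanSpace ℝ (Fin n)) R :=
    closure_minimal (hFR.trans ball_subset_closedBall) isClosed_closedBall (frontier_subset_closure hz)
  simpa [mem_closedBall, dist_eq_norm] using this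

/-- inner cone: for `x` in the closure and `t < 1`, the ball `B(t•x, (1-t)r)` is inside `F`. -/
lemma innerBall_subset (hF : StarShaped n r F) (hr : 0 < r) {x : EuclideanSpace ℝ (Fin n)}
    (hx : x ∈ closure F) {t : ℝ} (ht0 : 0 ≤ t) (ht1 : t < 1) :
    ball (t • x) ((1 - t) * r) ⊆ F := by
  intro p hp
  have h1t : (0:ℝ) < 1 - t := by linarith
  set y : EuclideanSpace ℝ (Fin n) := (1 - t)⁻¹ • (p - t • x) with hy
  have hyn : ‖y‖ < r := by
    have : ‖p - t • x‖ < (1 - t) * r := by simpa [dist_eq_norm] using hp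
    rw [hy, norm_smul]
    rw [Real.norm_eq_abs, abs_inv, abs_of_pos h1t]
    calc (1 - t)⁻¹ * ‖p - t • x‖ < (1 - t)⁻¹ * ((1 - t) * r) := by
          exact mul_lt_mul_of_pos_left this (by positivity)
      _ = r := by field_simp
  have hδ : (0:ℝ) < (1 - t) * (r - ‖y‖) := by
    apply mul_pos h1t; linarith
  obtain ⟨x', hx'F, hx'd⟩ := Metric.mem_closure_iff.1 hx _ hδ
  set y' : EuclideanSpace ℝ (Fin n) := y + ((1 - t)⁻¹ * t) • (x - x') with hy'
  have hy'n : ‖y'‖ < r := by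
    have h2 : ‖((1 - t)⁻¹ * t) • (x - x')‖ ≤ (1 - t)⁻¹ * t * ((1 - t) * (r - ‖y‖)) := by
      rw [norm_smul, Real.norm_eq_abs, abs_of_nonneg (by positivity)]
      have := hx'd
      rw [dist_eq_norm] at this
      exact mul_le_mul_of_nonneg_left this.le (by positivity)
    have h3 : (1 - t)⁻¹ * t * ((1 - t) * (r - ‖y‖)) = t * (r - ‖y‖) := by field_simp
    have h4 : t * (r - ‖y‖) < r - ‖y‖ := by nlinarith [norm_nonneg y]
    calc ‖y'‖ ≤ ‖y‖ + ‖((1 - t)⁻¹ * t) • (x - x')‖ := norm_add_le _ _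
      _ ≤ ‖y‖ + t * (r - ‖y‖) := by rw [← h3]; linarith [h2]
      _ < r := by nlinarith [norm_nonneg y]
  have hp' : p = (1 - t) • y' + t • x' := by
    rw [hy', hy]
    rw [smul_add, smul_smul, smul_smul]
    rw [mul_inv_cancel₀ (ne_of_gt h1t), one_smul]
    have : (1 - t) * ((1 - t)⁻¹ * t) = t := by field_simp
    rw [this, smul_sub]
    abel
  rw [hp']
  exact seg_mem hF (by simpa using hy'n) hx'F ht0 ht1.le

/-- outer cone: if `x ∉ F` then the ball `B((1+s)•x, s*r)` misses `F`. -/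
lemma outerBall_disjoint (hF : StarShaped n r F) {x : EuclideanSpace ℝ (Fin n)}
    (hx : x ∉ F) {s : ℝ} (hs : 0 < s) :
    ball ((1 + s) • x) (s * r) ∩ F = ∅ := by
  by_contra h
  obtain ⟨w, hwb, hwF⟩ := nonempty_iff_ne_empty.2 h
  set y : EuclideanSpace ℝ (Fin n) := s⁻¹ • ((1 + s) • x - w) with hy
  have hyn : ‖y‖ < r := by
    have : ‖(1 + s) • x - w‖ < s * r := by
      rw [← dist_eq_norm] at *
      simpa [dist_comm] using hwb
    rw [hy, norm_smul, Real.norm_eq_abs, abs_inv, abs_of_pos hs]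
    calc s⁻¹ * ‖(1 + s) • x - w‖ < s⁻¹ * (s * r) := by
          exact mul_lt_mul_of_pos_left this (by positivity)
      _ = r := by field_simp
  have h1s : (0:ℝ) < 1 + s := by linarith
  have hx' : x = (1 - (1 + s)⁻¹) • y + (1 + s)⁻¹ • w := by
    rw [hy, smul_smul]
    have h1 : (1 - (1 + s)⁻¹) * s⁻¹ = (1 + s)⁻¹ := by field_simp; ring
    rw [h1, smul_sub, smul_smul]
    have h2 : (1 + s)⁻¹ * (1 + s) = 1 := by field_simp
    rw [h2, one_smul]
    abel
  apply hx
  rw [hx']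
  exact seg_mem hF (by simpa using hyn) hwF (by positivity)
    (by rw [inv_le_one_iff₀]; right; linarith)


lemma core (hF : StarShaped n r F) (hr : 0 < r)
    {e z w : EuclideanSpace ℝ (Fin n)}
    (hzF : z ∉ F) (hzc : ‖z - ‖z‖ • e‖ ≤ r / 4) (hzr : r ≤ ‖z‖) (hzR : ‖z‖ ≤ R)
    (hw : w ∈ closure F)
    (hK : 2 * R / r * ‖w - z - ⟪e, w - z⟫ • e‖ < ⟪e, w - z⟫) : False := by
  set a : ℝ := ⟪e, w - z⟫ with ha
  set h : EuclideanSpace ℝ (Fin n) := w - z - a • e with hh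
  have hhn : (0:ℝ) ≤ ‖h‖ := norm_nonneg _
  have hR : 0 < R := lt_of_lt_of_le hr (hzr.trans hzR)
  have ha0 : 0 < a := lt_of_le_of_lt (by positivity) hK
  have hz0 : (0:ℝ) < ‖z‖ := lt_of_lt_of_le hr hzr
  set s : ℝ := a / ‖z‖ with hs
  have hs0 : 0 < s := by positivity
  have hane : a ≠ 0 := ne_of_gt ha0
  have hzne : ‖z‖ ≠ 0 := ne_of_gt hz0
  have hsa : s⁻¹ * a = ‖z‖ := by rw [hs, inv_div]; field_simp
  have hkey : s⁻¹ * ‖h‖ ≤ r / 2 := by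
    have h1 : 2 * R * ‖h‖ < a * r := by
      rw [div_mul_eq_mul_div, div_lt_iff₀ hr] at hK
      linarith
    have hsinv : s⁻¹ = ‖z‖ / a := by rw [hs, inv_div]
    rw [hsinv, div_mul_eq_mul_div, div_le_iff₀ ha0]
    nlinarith [mul_le_mul_of_nonneg_right hzR hhn]
  -- every point near w is outside F
  have claim : ∀ w' ∈ ball w (s * r / 8), w' ∉ F := by
    intro w' hw'b hw'F
    set y' : EuclideanSpace ℝ (Fin n) := s⁻¹ • ((1 + s) • z - w') with hy'
    have hy'eq : y' = (z - ‖z‖ • e) - s⁻¹ • h - s⁻¹ • (w' - w) := by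
      rw [hy', hh]
      have hss : s⁻¹ * s = 1 := inv_mul_cancel₀ (ne_of_gt hs0)
      have hzs : ‖z‖ * s = a := by rw [hs]; field_simp
      match_scalars <;> field_simp
      · ring
      · linarith
      · ring
    have hy'n : ‖y'‖ < r := by
      have h2 : ‖s⁻¹ • h‖ ≤ r / 2 := by
        rw [norm_smul, Real.norm_eq_abs, abs_of_pos (by positivity)]; exact hkey
      have h3 : ‖s⁻¹ • (w' - w)‖ < r / 8 := by
        rw [norm_smul, Real.norm_eq_abs, abs_of_pos (by positivity)]
        have : ‖w' - w‖ < s * r / 8 := by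
          rw [← dist_eq_norm]; simpa [dist_comm] using hw'b
        calc s⁻¹ * ‖w' - w‖ < s⁻¹ * (s * r / 8) :=
              mul_lt_mul_of_pos_left this (by positivity)
          _ = r / 8 := by field_simp
      calc ‖y'‖ ≤ ‖(z - ‖z‖ • e) - s⁻¹ • h‖ + ‖s⁻¹ • (w' - w)‖ := by
            rw [hy'eq]; exact norm_sub_le _ _
        _ ≤ ‖z - ‖z‖ • e‖ + ‖s⁻¹ • h‖ + ‖s⁻¹ • (w' - w)‖ := by
            have := norm_sub_le (z - ‖z‖ • e) (s⁻¹ • h); linarith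
        _ < r := by linarith
    have hzmem : z = (1 - (1 + s)⁻¹) • y' + (1 + s)⁻¹ • w' := by
      rw [hy']
      have h1s : (0:ℝ) < 1 + s := by linarith
      match_scalars <;> field_simp <;> ring
    have h1s : (0:ℝ) < 1 + s := by linarith
    apply hzF
    rw [hzmem]
    refine seg_mem (t := (1+s)⁻¹) hF (by simpa using hy'n) hw'F (by positivity) ?_
    rw [inv_le_one_iff₀]
    right
    linarith
  obtain ⟨w', hw'F, hw'd⟩ := Metric.mem_closure_iff.1 hw _ (by positivity : (0:ℝ) < s * r / 8)
  exact claim w' (by simpa [mem_ball, dist_comm] using hw'd) hw'F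


/-- Pythagoras for the decomposition along a unit vector. -/
lemma decomp_sq {e u : EuclideanSpace ℝ (Fin n)} (he : ‖e‖ = 1) :
    ‖u‖ ^ 2 = ⟪e, u⟫ ^ 2 + ‖u - ⟪e, u⟫ • e‖ ^ 2 := by
  rw [show (⟪e, u⟫:ℝ) = ⟪u, e⟫ from real_inner_comm u e]
  have h := @norm_sub_sq_real (EuclideanSpace ℝ (Fin n)) _ _ u (⟪u, e⟫ • e)
  rw [real_inner_smul_right] at h
  rw [norm_smul, Real.norm_eq_abs, mul_pow, sq_abs, he] at h
  nlinarith [h]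

lemma proj_norm_le {e u : EuclideanSpace ℝ (Fin n)} (he : ‖e‖ = 1) :
    ‖u - ⟪e, u⟫ • e‖ ≤ ‖u‖ := by
  have h := decomp_sq (u := u) he
  nlinarith [norm_nonneg (u - ⟪e, u⟫ • e), norm_nonneg u, sq_nonneg (⟪e, u⟫)]


/-- comparing Euclidean and sup norms. -/
lemma euclid_norm_le (m : ℕ) (v : Fin m → ℝ) :
    ‖(WithLp.equiv 2 (Fin m → ℝ)).symm v‖ ≤ Real.sqrt m * ‖v‖ := by
  rw [EuclideanSpace.norm_eq]
  have h1 : ∀ i, ‖((WithLp.equiv 2 (Fin m → ℝ)).symm v) i‖ ^ 2 ≤ ‖v‖ ^ 2 := by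
    intro i
    change ‖v i‖ ^ 2 ≤ _
    have := norm_le_pi_norm v i
    nlinarith [norm_nonneg (v i), norm_nonneg v]
  calc Real.sqrt (∑ i, ‖((WithLp.equiv 2 (Fin m → ℝ)).symm v) i‖ ^ 2)
      ≤ Real.sqrt (∑ _i : Fin m, ‖v‖ ^ 2) := by
        apply Real.sqrt_le_sqrt
        exact Finset.sum_le_sum fun i _ => h1 i
    _ = Real.sqrt m * ‖v‖ := by
        rw [Finset.sum_const, Finset.card_univ, Fintype.card_fin, nsmul_eq_mul]
        rw [Real.sqrt_mul (by positivity), Real.sqrt_sq (norm_nonneg v)]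

lemma pi_norm_le_euclid (m : ℕ) (v : EuclideanSpace ℝ (Fin m)) :
    ‖WithLp.equiv 2 (Fin m → ℝ) v‖ ≤ ‖v‖ := by
  rw [pi_norm_le_iff_of_nonneg (norm_nonneg v)]
  intro i
  change ‖v i‖ ≤ _
  rw [EuclideanSpace.norm_eq]
  have h2 : ‖v i‖ ^ 2 ≤ ∑ j, ‖v j‖ ^ 2 :=
    Finset.single_le_sum (f := fun j => ‖v j‖ ^ 2) (fun j _ => by positivity) (Finset.mem_univ i)
  calc ‖v i‖ = Real.sqrt (‖v i‖ ^ 2) := (Real.sqrt_sq (norm_nonneg _)).symm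
    _ ≤ Real.sqrt (∑ j, ‖v j‖ ^ 2) := Real.sqrt_le_sqrt h2

/-- Hausdorff measure bound for subsets of a closed ball in Euclidean space. -/
lemma hausdorff_ball_bound (m : ℕ) (c : EuclideanSpace ℝ (Fin m)) (ρ : ℝ) (hρ : 0 ≤ ρ)
    (A : Set (EuclideanSpace ℝ (Fin m))) (hA : A ⊆ closedBall c ρ) :
    μH[(m:ℝ)] A ≤ ENNReal.ofReal (Real.sqrt m ^ m * (2 * ρ) ^ m) := by
  set f : (Fin m → ℝ) → EuclideanSpace ℝ (Fin m) :=
    fun x => ((WithLp.equiv 2 (Fin m → ℝ)).symm x : EuclideanSpace ℝ (Fin m)) with hf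
  set K : ℝ≥0 := Real.toNNReal (Real.sqrt m) with hKdef
  have hKco : (K : ℝ) = Real.sqrt m := Real.coe_toNNReal _ (Real.sqrt_nonneg m)
  have hlip : LipschitzWith K f := by
    apply LipschitzWith.of_dist_le_mul
    intro x y
    rw [dist_eq_norm, dist_eq_norm, hKco]
    have : f x - f y = f (x - y) := rfl
    rw [this]
    exact euclid_norm_le m (x - y)
  have hsur : f '' (f ⁻¹' A) = A := by
    apply Set.image_preimage_eq A
    exact (WithLp.equiv 2 (Fin m → ℝ)).symm.surjective
  have h1 : μH[(m:ℝ)] A ≤ (K : ℝ≥0∞) ^ (m:ℝ) * μH[(m:ℝ)] (f ⁻¹' A) := by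
    conv_lhs => rw [← hsur]
    exact hlip.hausdorffMeasure_image_le (by positivity) _
  have hHpi : (μH[(m:ℝ)] : Measure (Fin m → ℝ)) = volume := by
    have := hausdorffMeasure_pi_real (ι := Fin m)
    rwa [Fintype.card_fin] at this
  have h2 : μH[(m:ℝ)] (f ⁻¹' A) ≤ ENNReal.ofReal ((2 * ρ) ^ m) := by
    rw [hHpi]
    have hsub : f ⁻¹' A ⊆ closedBall (WithLp.equiv 2 (Fin m → ℝ) c) ρ := by
      intro x hx
      have hxA : f x ∈ closedBall c ρ := hA hx
      rw [mem_closedBall] at *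
      calc dist x (WithLp.equiv 2 (Fin m → ℝ) c) = ‖WithLp.equiv 2 (Fin m → ℝ) (f x - c)‖ := by
            rw [dist_eq_norm]; rfl
        _ ≤ ‖f x - c‖ := pi_norm_le_euclid m _
        _ ≤ ρ := by rwa [← dist_eq_norm]
    calc volume (f ⁻¹' A) ≤ volume (closedBall (WithLp.equiv 2 (Fin m → ℝ) c) ρ) :=
          measure_mono hsub
      _ ≤ ENNReal.ofReal ((2 * ρ) ^ m) := by
          rw [closedBall_pi _ hρ]
          rw [volume_pi_pi]
          simp only [Real.volume_closedBall]
          rw [Finset.prod_const, Finset.card_univ, Fintype.card_fin]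
          rw [ENNReal.ofReal_pow (by positivity)]
  have hKco2 : (K : ℝ≥0∞) = ENNReal.ofReal (Real.sqrt m) := by
    rw [ENNReal.ofReal, hKdef]
  calc μH[(m:ℝ)] A ≤ _ := h1
    _ ≤ (K : ℝ≥0∞) ^ (m:ℝ) * ENNReal.ofReal ((2 * ρ) ^ m) := by
        exact mul_le_mul_right h2 _
    _ = ENNReal.ofReal (Real.sqrt m ^ m * (2 * ρ) ^ m) := by
        rw [ENNReal.rpow_natCast, hKco2, ← ENNReal.ofReal_pow (Real.sqrt_nonneg m),
          ← ENNReal.ofReal_mul (by positivity)]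


lemma hausdorff_hyperplane_bound {n : ℕ} (hn : 1 ≤ n) (e : EuclideanSpace ℝ (Fin n))
    (he : ‖e‖ = 1) (c : EuclideanSpace ℝ (Fin n)) (ρ : ℝ) (hρ : 0 ≤ ρ)
    (T : Set (EuclideanSpace ℝ (Fin n))) (hT1 : ∀ v ∈ T, ⟪e, v⟫ = 0)
    (hTc : T ⊆ closedBall c ρ) :
    μH[(n:ℝ) - 1] T ≤
      ENNReal.ofReal (Real.sqrt (n - 1 : ℕ) ^ (n - 1) * (2 * ρ) ^ (n - 1)) := by
  have hd0 : (0:ℝ) ≤ (n:ℝ) - 1 := by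
    have : (1:ℝ) ≤ (n:ℝ) := by exact_mod_cast hn
    linarith
  set c' : EuclideanSpace ℝ (Fin n) := c - ⟪e, c⟫ • e with hc'
  have hTc' : T ⊆ closedBall c' ρ := by
    intro v hv
    have h1 : v - c' = (v - c) - ⟪e, v - c⟫ • e := by
      rw [hc', inner_sub_right, hT1 v hv]
      simp only [zero_sub, neg_smul]
      abel
    rw [mem_closedBall, dist_eq_norm, h1]
    exact le_trans (proj_norm_le he) (by rw [← dist_eq_norm]; exact hTc hv)
  set H₀ : Submodule ℝ (EuclideanSpace ℝ (Fin n)) := (ℝ ∙ e)ᗮ with hH₀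
  have hTH : T ⊆ (H₀ : Set (EuclideanSpace ℝ (Fin n))) := by
    intro v hv
    rw [hH₀, SetLike.mem_coe, Submodule.mem_orthogonal_singleton_iff_inner_right]
    exact hT1 v hv
  have he0 : e ≠ 0 := by
    intro h; rw [h, norm_zero] at he; exact one_ne_zero he.symm
  have hc'H : c' ∈ H₀ := by
    rw [hH₀, Submodule.mem_orthogonal_singleton_iff_inner_right, hc', inner_sub_right,
      real_inner_smul_right, real_inner_self_eq_norm_sq, he]
    ring
  set S : Set H₀ := (Subtype.val : H₀ → EuclideanSpace ℝ (Fin n)) ⁻¹' T with hS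
  have hTS : Subtype.val '' S = T :=
    Set.image_preimage_eq_of_subset (by rwa [Subtype.range_coe])
  have h1 : μH[(n:ℝ) - 1] T = μH[(n:ℝ) - 1] S := by
    rw [← hTS]
    exact isometry_subtype_coe.hausdorffMeasure_image (Or.inl hd0) S
  haveI : Fact (Module.finrank ℝ (EuclideanSpace ℝ (Fin n)) = (n - 1) + 1) :=
    ⟨by rw [finrank_euclideanSpace_fin]; omega⟩
  have hdim : Module.finrank ℝ H₀ = n - 1 := Submodule.finrank_orthogonal_span_singleton he0
  set φ := (stdOrthonormalBasis ℝ H₀).repr with hφ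
  have h2 : μH[(n:ℝ) - 1] S = μH[(n:ℝ) - 1] (φ '' S) :=
    (φ.isometry.hausdorffMeasure_image (Or.inr φ.surjective) S).symm
  have h3 : φ '' S ⊆ closedBall (φ ⟨c', hc'H⟩) ρ := by
    rintro _ ⟨y, hy, rfl⟩
    rw [mem_closedBall, φ.dist_map, Subtype.dist_eq]
    exact hTc' hy
  have hreal : (n:ℝ) - 1 = ((Module.finrank ℝ H₀ : ℕ) : ℝ) := by
    rw [hdim, Nat.cast_sub hn, Nat.cast_one]
  rw [h1, h2, hreal]
  have h4 := hausdorff_ball_bound (Module.finrank ℝ H₀) (φ ⟨c', hc'H⟩) ρ hρ (φ '' S) h3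
  refine h4.trans (le_of_eq ?_)
  rw [hdim]


lemma graph_est (hF : StarShaped n r F) (hr : 0 < r)
    (hFR : F ⊆ ball (0 : EuclideanSpace ℝ (Fin n)) R)
    {e z w : EuclideanSpace ℝ (Fin n)}
    (hz : z ∈ frontier F) (hw : w ∈ frontier F)
    (hze : ‖z - ‖z‖ • e‖ ≤ r / 4) (hwe : ‖w - ‖w‖ • e‖ ≤ r / 4) :
    |⟪e, w - z⟫| ≤ 2 * R / r * ‖w - z - ⟪e, w - z⟫ • e‖ := by
  by_contra hcon
  push_neg at hcon
  rcases le_or_gt 0 (⟪e, w - z⟫ : ℝ) with hsgn | hsgn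
  · rw [abs_of_nonneg hsgn] at hcon
    exact core hF hr (frontier_not_mem hF hz) hze (frontier_norm_lb hF hz)
      (frontier_norm_ub hFR hz) (frontier_subset_closure hw) hcon
  · rw [abs_of_neg hsgn] at hcon
    have h1 : (⟪e, z - w⟫ : ℝ) = -⟪e, w - z⟫ := by
      rw [show z - w = -(w - z) by abel, inner_neg_right]
    have h2 : z - w - (⟪e, z - w⟫ : ℝ) • e = -(w - z - ⟪e, w - z⟫ • e) := by
      rw [h1]; simp only [neg_smul]; abel
    apply core hF hr (frontier_not_mem hF hw) hwe (frontier_norm_lb hF hw)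
      (frontier_norm_ub hFR hw) (frontier_subset_closure hz)
    rw [h2, norm_neg, h1]
    exact hcon

/-- Ahlfors-type upper bound on small caps of the frontier. -/
lemma frontier_cap_bound (hn : 1 ≤ n) (hr : 0 < r) (hrR : r < R) (hF : StarShaped n r F)
    (hFR : F ⊆ ball (0 : EuclideanSpace ℝ (Fin n)) R)
    {b : EuclideanSpace ℝ (Fin n)} (hb : b ∈ frontier F) {ρ : ℝ} (hρ0 : 0 ≤ ρ)
    (hρ : ρ ≤ r / 16) :
    μH[(n:ℝ) - 1] (frontier F ∩ closedBall b ρ) ≤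
      ENNReal.ofReal ((1 + 2 * R / r) ^ (n - 1) *
        (Real.sqrt (n - 1 : ℕ) ^ (n - 1) * (2 * ρ) ^ (n - 1))) := by
  have hd0 : (0:ℝ) ≤ (n:ℝ) - 1 := by
    have : (1:ℝ) ≤ (n:ℝ) := by exact_mod_cast hn
    linarith
  have hbr : r ≤ ‖b‖ := frontier_norm_lb hF hb
  have hb0 : (0:ℝ) < ‖b‖ := lt_of_lt_of_le hr hbr
  have hR0 : (0:ℝ) < R := lt_trans hr hrR
  set e : EuclideanSpace ℝ (Fin n) := ‖b‖⁻¹ • b with hedef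
  have he : ‖e‖ = 1 := by
    rw [hedef, norm_smul, Real.norm_eq_abs, abs_inv, abs_of_pos hb0,
      inv_mul_cancel₀ (ne_of_gt hb0)]
  have hbe : b = ‖b‖ • e := by
    rw [hedef, smul_smul, mul_inv_cancel₀ (ne_of_gt hb0), one_smul]
  set S : Set (EuclideanSpace ℝ (Fin n)) := frontier F ∩ closedBall b ρ with hSdef
  -- cone condition for points of S
  have hcone : ∀ z ∈ S, ‖z - ‖z‖ • e‖ ≤ r / 4 := by
    rintro z ⟨hzf, hzb⟩
    have h1 : ‖z - b‖ ≤ ρ := by rw [← dist_eq_norm]; exact hzb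
    have h2 : b - ‖z‖ • e = (‖b‖ - ‖z‖) • e := by rw [sub_smul, ← hbe]
    calc ‖z - ‖z‖ • e‖ = ‖(z - b) + (b - ‖z‖ • e)‖ := by abel_nf
      _ ≤ ‖z - b‖ + ‖b - ‖z‖ • e‖ := norm_add_le _ _
      _ ≤ ρ + |‖b‖ - ‖z‖| := by
          rw [h2, norm_smul, Real.norm_eq_abs, he, mul_one]
          exact add_le_add_left h1 _
      _ ≤ ρ + ρ := by
          have := abs_norm_sub_norm_le b z
          have hbz : ‖b - z‖ ≤ ρ := by rw [norm_sub_rev]; exact h1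
          exact add_le_add_right (le_trans this hbz) _
      _ ≤ r / 4 := by linarith
  set K : ℝ := 2 * R / r with hKdef
  have hK0 : 0 ≤ K := by positivity
  set p : EuclideanSpace ℝ (Fin n) → EuclideanSpace ℝ (Fin n) :=
    fun v => v - (⟪e, v⟫ : ℝ) • e with hpdef
  have hpsub : ∀ z w : EuclideanSpace ℝ (Fin n),
      p w - p z = w - z - (⟪e, w - z⟫ : ℝ) • e := by
    intro z w
    rw [hpdef]
    simp only [inner_sub_right, sub_smul]
    abel
  -- reverse Lipschitz estimate on S
  have hback : ∀ z ∈ S, ∀ w ∈ S, ‖w - z‖ ≤ (1 + K) * ‖p w - p z‖ := by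
    intro z hzS w hwS
    have hab := graph_est hF hr hFR hzS.1 hwS.1 (hcone z hzS) (hcone w hwS)
    rw [← hpsub] at hab
    have hds := decomp_sq (e := e) (u := w - z) he
    rw [← hpsub] at hds
    nlinarith [norm_nonneg (w - z), norm_nonneg (p w - p z), abs_nonneg (⟪e, w - z⟫ : ℝ),
      sq_nonneg (‖w - z‖ + (1 + K) * ‖p w - p z‖), sq_abs (⟪e, w - z⟫ : ℝ)]
  have hpinj : ∀ z ∈ S, ∀ w ∈ S, p z = p w → z = w := by
    intro z hzS w hwS hpe
    have := hback z hzS w hwS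
    rw [hpe, sub_self, norm_zero, mul_zero] at this
    have : ‖w - z‖ = 0 := le_antisymm this (norm_nonneg _)
    rw [norm_eq_zero, sub_eq_zero] at this
    exact this.symm
  set T : Set (EuclideanSpace ℝ (Fin n)) := p '' S with hTdef
  set g : EuclideanSpace ℝ (Fin n) → EuclideanSpace ℝ (Fin n) := Function.invFunOn p S
    with hgdef
  have hgmem : ∀ q ∈ T, g q ∈ S ∧ p (g q) = q := by
    rintro q ⟨z, hzS, rfl⟩
    exact ⟨Function.invFunOn_mem ⟨z, hzS, rfl⟩, Function.invFunOn_eq ⟨z, hzS, rfl⟩⟩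
  have hgim : g '' T = S := by
    apply Set.Subset.antisymm
    · rintro _ ⟨q, hqT, rfl⟩
      exact (hgmem q hqT).1
    · intro z hzS
      refine ⟨p z, ⟨z, hzS, rfl⟩, ?_⟩
      have h1 := hgmem (p z) ⟨z, hzS, rfl⟩
      exact hpinj _ h1.1 _ hzS h1.2
  have hglip : LipschitzOnWith (Real.toNNReal (1 + K)) g T := by
    rw [lipschitzOnWith_iff_dist_le_mul]
    intro q1 hq1 q2 hq2
    have h1 := hgmem q1 hq1
    have h2 := hgmem q2 hq2
    rw [dist_eq_norm, dist_eq_norm, Real.coe_toNNReal _ (by positivity)]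
    calc ‖g q1 - g q2‖ ≤ (1 + K) * ‖p (g q1) - p (g q2)‖ :=
          hback (g q2) h2.1 (g q1) h1.1
      _ = (1 + K) * ‖q1 - q2‖ := by rw [h1.2, h2.2]
  -- hyperplane bound for T
  have hT1 : ∀ v ∈ T, (⟪e, v⟫ : ℝ) = 0 := by
    rintro _ ⟨z, _, rfl⟩
    rw [hpdef]
    simp only [inner_sub_right, real_inner_smul_right]
    rw [real_inner_self_eq_norm_sq, he]
    ring
  have hTc : T ⊆ closedBall (p b) ρ := by
    rintro _ ⟨z, hzS, rfl⟩
    rw [mem_closedBall, dist_eq_norm, hpsub]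
    calc ‖z - b - (⟪e, z - b⟫ : ℝ) • e‖ ≤ ‖z - b‖ := proj_norm_le he
      _ ≤ ρ := by rw [← dist_eq_norm]; exact hzS.2
  have hTbound := hausdorff_hyperplane_bound hn e he (p b) ρ hρ0 T hT1 hTc
  -- combine
  have h1 : μH[(n:ℝ) - 1] S ≤ ((Real.toNNReal (1 + K) : ℝ≥0∞)) ^ ((n:ℝ) - 1) * μH[(n:ℝ) - 1] T := by
    conv_lhs => rw [← hgim]
    exact hglip.hausdorffMeasure_image_le hd0
  have hcoe : ((Real.toNNReal (1 + K) : ℝ≥0∞)) ^ ((n:ℝ) - 1) =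
      ENNReal.ofReal ((1 + K) ^ (n - 1)) := by
    rw [show ((n:ℝ) - 1) = ((n - 1 : ℕ) : ℝ) by rw [Nat.cast_sub hn, Nat.cast_one]]
    rw [ENNReal.rpow_natCast]
    rw [show ((Real.toNNReal (1 + K) : ℝ≥0∞)) = ENNReal.ofReal (1 + K) from rfl]
    rw [ENNReal.ofReal_pow (by positivity)]
  calc μH[(n:ℝ) - 1] S ≤ _ := h1
    _ ≤ ((Real.toNNReal (1 + K) : ℝ≥0∞)) ^ ((n:ℝ) - 1) *
        ENNReal.ofReal (Real.sqrt (n - 1 : ℕ) ^ (n - 1) * (2 * ρ) ^ (n - 1)) :=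
          mul_le_mul_right hTbound _
    _ = ENNReal.ofReal ((1 + K) ^ (n - 1) *
        (Real.sqrt (n - 1 : ℕ) ^ (n - 1) * (2 * ρ) ^ (n - 1))) := by
        rw [hcoe, ← ENNReal.ofReal_mul (by positivity)]


lemma ahlfors (hn : 2 ≤ n) (hr : 0 < r) (hrR : r < R) :
    ∃ A : ℝ, 0 < A ∧ ∀ F : Set (EuclideanSpace ℝ (Fin n)), StarShaped n r F →
      F ⊆ ball (0 : EuclideanSpace ℝ (Fin n)) R →
      ∀ b ∈ frontier F, ∀ ρ : ℝ, 0 < ρ →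
      μH[(n:ℝ) - 1] (frontier F ∩ closedBall b ρ) ≤ ENNReal.ofReal (A * ρ ^ (n - 1)) := by
  have hn1 : 1 ≤ n := le_trans (by norm_num) hn
  have hR0 : (0:ℝ) < R := lt_trans hr hrR
  have hsq : (0:ℝ) < Real.sqrt (n - 1 : ℕ) := by
    apply Real.sqrt_pos.2
    have : 1 ≤ n - 1 := by omega
    exact_mod_cast Nat.lt_of_lt_of_le Nat.zero_lt_one this
  set C₂ : ℝ := (1 + 2 * R / r) ^ (n - 1) * (Real.sqrt (n - 1 : ℕ) ^ (n - 1) * 2 ^ (n - 1))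
    with hC₂
  have hC₂0 : 0 < C₂ := by positivity
  -- finite subcover of the big closed ball
  obtain ⟨T, hT⟩ := (isCompact_closedBall (0 : EuclideanSpace ℝ (Fin n)) R).elim_finite_subcover
    (fun t : EuclideanSpace ℝ (Fin n) => ball t (r / 32)) (fun _ => isOpen_ball)
    (fun x _ => mem_iUnion.2 ⟨x, mem_ball_self (by positivity)⟩)
  set G : ℝ := T.card * (C₂ * (r / 16) ^ (n - 1)) with hG
  have hG0 : 0 ≤ G := by positivity
  set A : ℝ := C₂ + G * (16 / r) ^ (n - 1) with hA
  have hA0 : 0 < A := by positivity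
  refine ⟨A, hA0, ?_⟩
  intro F hF hFR b hb ρ hρ0
  -- global bound
  have hglobal : μH[(n:ℝ) - 1] (frontier F) ≤ ENNReal.ofReal G := by
    have hcover : frontier F ⊆ ⋃ i ∈ T, (frontier F ∩ ball i (r / 32)) := by
      intro z hz
      have hzR : z ∈ closedBall (0 : EuclideanSpace ℝ (Fin n)) R := by
        rw [mem_closedBall, dist_eq_norm, sub_zero]
        exact frontier_norm_ub hFR hz
      obtain ⟨i, hiT, hzi⟩ := mem_iUnion₂.1 (hT hzR)
      exact mem_iUnion₂.2 ⟨i, hiT, hz, hzi⟩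
    have hsum : μH[(n:ℝ) - 1] (frontier F) ≤
        ∑ i ∈ T, μH[(n:ℝ) - 1] (frontier F ∩ ball i (r / 32)) :=
      le_trans (measure_mono hcover) (measure_biUnion_finset_le _ _)
    have hterm : ∀ i ∈ T, μH[(n:ℝ) - 1] (frontier F ∩ ball i (r / 32)) ≤
        ENNReal.ofReal (C₂ * (r / 16) ^ (n - 1)) := by
      intro i _
      rcases (frontier F ∩ ball i (r / 32)).eq_empty_or_nonempty with hemp | ⟨z₀, hz₀⟩
      · rw [hemp]; simp
      · have hsub : frontier F ∩ ball i (r / 32) ⊆ frontier F ∩ closedBall z₀ (r / 16) := by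
          rintro z ⟨hzf, hzb⟩
          refine ⟨hzf, ?_⟩
          rw [mem_closedBall]
          calc dist z z₀ ≤ dist z i + dist i z₀ := dist_triangle _ _ _
            _ ≤ r / 32 + r / 32 := by
                have h1 : dist z i < r / 32 := hzb
                have h2 : dist i z₀ < r / 32 := by rw [dist_comm]; exact hz₀.2
                linarith
            _ = r / 16 := by ring
        refine le_trans (measure_mono hsub) ?_
        refine le_trans (frontier_cap_bound hn1 hr hrR hF hFR hz₀.1 (by positivity) le_rfl) ?_
        apply le_of_eq
        congr 1
        rw [hC₂]
        rw [mul_pow 2 (r/16)]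
        ring
    calc μH[(n:ℝ) - 1] (frontier F) ≤ _ := hsum
      _ ≤ ∑ _i ∈ T, ENNReal.ofReal (C₂ * (r / 16) ^ (n - 1)) := Finset.sum_le_sum hterm
      _ = T.card * ENNReal.ofReal (C₂ * (r / 16) ^ (n - 1)) := by
          rw [Finset.sum_const, nsmul_eq_mul]
      _ = ENNReal.ofReal G := by
          rw [hG, ENNReal.ofReal_mul (by positivity : (0:ℝ) ≤ (T.card : ℝ)),
            ENNReal.ofReal_natCast]
  rcases le_or_gt ρ (r / 16) with hsmall | hlarge
  · refine le_trans (frontier_cap_bound hn1 hr hrR hF hFR hb hρ0.le hsmall) ?_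
    apply ENNReal.ofReal_le_ofReal
    have h1 : (2 * ρ) ^ (n - 1) = 2 ^ (n - 1) * ρ ^ (n - 1) := mul_pow _ _ _
    rw [h1]
    have h2 : (1 + 2 * R / r) ^ (n - 1) * (Real.sqrt (n - 1 : ℕ) ^ (n - 1) *
        (2 ^ (n - 1) * ρ ^ (n - 1))) = C₂ * ρ ^ (n - 1) := by rw [hC₂]; ring
    rw [h2]
    apply mul_le_mul_of_nonneg_right _ (by positivity)
    rw [hA]
    nlinarith [hG0, pow_nonneg (by positivity : (0:ℝ) ≤ 16 / r) (n - 1)]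
  · refine le_trans (measure_mono inter_subset_left) (le_trans hglobal ?_)
    apply ENNReal.ofReal_le_ofReal
    have hone : (16 / r) ^ (n - 1) * (r / 16) ^ (n - 1) = 1 := by
      rw [← mul_pow]
      have : 16 / r * (r / 16) = 1 := by field_simp
      rw [this, one_pow]
    have h1 : (r / 16) ^ (n - 1) ≤ ρ ^ (n - 1) :=
      pow_le_pow_left₀ (by positivity) hlarge.le _
    have h2 : G = G * ((16 / r) ^ (n - 1) * (r / 16) ^ (n - 1)) := by rw [hone, mul_one]
    rw [h2, hA]
    have h3 : (0:ℝ) ≤ (16 / r) ^ (n - 1) := by positivity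
    nlinarith [mul_nonneg hC₂0.le (pow_nonneg hρ0.le (n - 1)),
      mul_le_mul_of_nonneg_left (mul_le_mul_of_nonneg_left h1 h3) hG0]


lemma cone_bound (hn : 1 ≤ n) (hr : 0 < r) (hrR : r < R)
    {E F : Set (EuclideanSpace ℝ (Fin n))}
    (hE : StarShaped n r E) (hER : E ⊆ ball (0 : EuclideanSpace ℝ (Fin n)) R)
    (hEne : E.Nonempty) (hF : StarShaped n r F)
    (hFR : F ⊆ ball (0 : EuclideanSpace ℝ (Fin n)) R)
    {x : EuclideanSpace ℝ (Fin n)} (hx : x ∈ frontier F)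
    (hd : 0 < infDist x (frontier E)) :
    ENNReal.ofReal ((r / (4 * R)) ^ n / 2 * infDist x (frontier E) ^ (n + 1)) *
        volume (ball (0 : EuclideanSpace ℝ (Fin n)) 1) ≤
      ∫⁻ y in (E ∆ F) ∩ closedBall x (infDist x (frontier E) / 2),
        ENNReal.ofReal (infDist y (frontier E)) := by
  have hR0 : (0:ℝ) < R := lt_trans hr hrR
  set d : ℝ := infDist x (frontier E) with hddef
  have hxr : r ≤ ‖x‖ := frontier_norm_lb hF hx
  have hx0 : (0:ℝ) < ‖x‖ := lt_of_lt_of_le hr hxr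
  have hxR : ‖x‖ ≤ R := frontier_norm_ub hFR hx
  set ρ₀ : ℝ := d * (r / (4 * R)) with hρ₀def
  have hρ₀ : 0 < ρ₀ := by positivity
  have hρ₀d : ρ₀ ≤ d / 4 := by
    have h : r / (4 * R) ≤ 1 / 4 := by
      rw [div_le_div_iff₀ (by positivity) (by norm_num : (0:ℝ) < 4)]
      linarith
    calc ρ₀ ≤ d * (1 / 4) := mul_le_mul_of_nonneg_left h hd.le
      _ = d / 4 := by ring
  -- the ball of radius d around x misses the frontier of E
  have hballE : ball x d ∩ frontier E = ∅ := by
    rw [eq_empty_iff_forall_notMem]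
    rintro z ⟨hzb, hzf⟩
    exact absurd (infDist_le_dist_of_mem hzf) (by rw [← hddef]; push_neg
                                                  rw [dist_comm]; exact hzb)
  have hcases : ball x d ⊆ E ∨ ball x d ⊆ (closure E)ᶜ := by
    apply IsPreconnected.subset_or_subset hE.1 isClosed_closure.isOpen_compl
    · exact Disjoint.mono_right (compl_subset_compl.2 subset_closure) disjoint_compl_right
    · intro z hz
      by_cases hzE : z ∈ closure E
      · left
        by_contra hzE'
        have : z ∈ frontier E := by rw [hE.1.frontier_eq]; exact ⟨hzE, hzE'⟩
        exact (eq_empty_iff_forall_notMem.1 hballE) z ⟨hz, this⟩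
      · right; exact hzE
    · exact (convex_ball x d).isPreconnected
  -- a ball of radius ρ₀ inside (E ∆ F) ∩ B(x, d/2)
  have key : ∃ w₀ : EuclideanSpace ℝ (Fin n),
      ball w₀ ρ₀ ⊆ (E ∆ F) ∩ closedBall x (d / 2) := by
    rcases hcases with hcase | hcase
    · -- outer cone, region in E \ F
      set s : ℝ := d / (4 * ‖x‖) with hsdef
      have hs0 : 0 < s := by positivity
      refine ⟨(1 + s) • x, ?_⟩
      have hsr : ρ₀ ≤ s * r := by
        have e1 : ρ₀ = d * r / (4 * R) := by rw [hρ₀def]; ring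
        have e2 : s * r = d * r / (4 * ‖x‖) := by rw [hsdef]; ring
        rw [e1, e2]
        gcongr
      have hdistc : dist ((1 + s) • x) x = d / 4 := by
        have h1 : (1 + s) • x - x = s • x := by module
        rw [dist_eq_norm, h1, norm_smul, Real.norm_eq_abs, abs_of_pos hs0, hsdef]
        field_simp
      have hsubx : ball ((1 + s) • x) ρ₀ ⊆ ball x (d / 2) := by
        intro w hw
        rw [mem_ball] at *
        calc dist w x ≤ dist w ((1 + s) • x) + dist ((1 + s) • x) x := dist_triangle _ _ _
          _ < ρ₀ + d / 4 := by rw [hdistc]; exact add_lt_add_left hw _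
          _ ≤ d / 2 := by linarith
      intro w hw
      have hwE : w ∈ E := hcase (ball_subset_ball (by linarith) (hsubx hw))
      have hwnF : w ∉ F := by
        intro hwF
        have : w ∈ ball ((1 + s) • x) (s * r) := ball_subset_ball hsr hw
        exact (eq_empty_iff_forall_notMem.1 (outerBall_disjoint hF (frontier_not_mem hF hx) hs0))
          w ⟨this, hwF⟩
      exact ⟨Set.mem_symmDiff.2 (Or.inl ⟨hwE, hwnF⟩), ball_subset_closedBall (hsubx hw)⟩
    · -- inner cone, region in F \ E
      have hdx : d ≤ ‖x‖ := by
        by_contra hcon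
        push_neg at hcon
        have h0E : (0 : EuclideanSpace ℝ (Fin n)) ∈ E :=
          ball_subset hE hEne (by simpa using hr)
        have : (0 : EuclideanSpace ℝ (Fin n)) ∈ ball x d := by
          rw [mem_ball, dist_comm, dist_eq_norm, sub_zero]; exact hcon
        exact hcase this (subset_closure h0E)
      set t : ℝ := 1 - d / (4 * ‖x‖) with htdef
      have ht0 : 0 ≤ t := by
        rw [htdef, sub_nonneg, div_le_one (by positivity)]
        linarith
      have ht1 : t < 1 := by
        rw [htdef]
        have : 0 < d / (4 * ‖x‖) := by positivity
        linarith
      refine ⟨t • x, ?_⟩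
      have h1t : 1 - t = d / (4 * ‖x‖) := by rw [htdef]; ring
      have hsr : ρ₀ ≤ (1 - t) * r := by
        have e1 : ρ₀ = d * r / (4 * R) := by rw [hρ₀def]; ring
        have e2 : (1 - t) * r = d * r / (4 * ‖x‖) := by rw [h1t]; ring
        rw [e1, e2]
        gcongr
      have hdistc : dist (t • x) x = d / 4 := by
        have h1 : t • x - x = -((1 - t) • x) := by module
        rw [dist_eq_norm, h1, norm_neg, norm_smul, Real.norm_eq_abs,
          abs_of_pos (by rw [h1t]; positivity), h1t]
        field_simp
      have hsubx : ball (t • x) ρ₀ ⊆ ball x (d / 2) := by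
        intro w hw
        rw [mem_ball] at *
        calc dist w x ≤ dist w (t • x) + dist (t • x) x := dist_triangle _ _ _
          _ < ρ₀ + d / 4 := by rw [hdistc]; exact add_lt_add_left hw _
          _ ≤ d / 2 := by linarith
      intro w hw
      have hwF : w ∈ F :=
        innerBall_subset hF hr (frontier_subset_closure hx) ht0 ht1
          (ball_subset_ball hsr hw)
      have hwnE : w ∉ E := by
        intro hwE
        exact hcase (ball_subset_ball (by linarith) (hsubx hw)) (subset_closure hwE)
      exact ⟨Set.mem_symmDiff.2 (Or.inr ⟨hwF, hwnE⟩), ball_subset_closedBall (hsubx hw)⟩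
  obtain ⟨w₀, hw₀⟩ := key
  -- pointwise lower bound on the closed ball
  have hptwise : ∀ y ∈ ball w₀ ρ₀, ENNReal.ofReal (d / 2) ≤ ENNReal.ofReal (infDist y (frontier E)) := by
    intro y hy
    apply ENNReal.ofReal_le_ofReal
    have h1 : dist x y ≤ d / 2 := by
      have := (hw₀ hy).2
      rw [mem_closedBall, dist_comm] at this
      exact this
    have h2 : infDist x (frontier E) ≤ infDist y (frontier E) + dist x y :=
      infDist_le_infDist_add_dist
    rw [← hddef] at h2
    linarith
  haveI : Nontrivial (EuclideanSpace ℝ (Fin n)) :=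
    Module.nontrivial_of_finrank_pos (R := ℝ) (by rw [finrank_euclideanSpace_fin]; omega)
  have hvol : volume (ball w₀ ρ₀) =
      ENNReal.ofReal (ρ₀ ^ n) * volume (ball (0 : EuclideanSpace ℝ (Fin n)) 1) := by
    rw [Measure.addHaar_ball volume w₀ hρ₀.le, finrank_euclideanSpace_fin]
  calc ENNReal.ofReal ((r / (4 * R)) ^ n / 2 * d ^ (n + 1)) *
        volume (ball (0 : EuclideanSpace ℝ (Fin n)) 1)
      = ENNReal.ofReal (d / 2) * volume (ball w₀ ρ₀) := by
        rw [hvol, ← mul_assoc, ← ENNReal.ofReal_mul (by positivity)]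
        congr 2
        rw [hρ₀def, mul_pow, pow_succ]
        ring
    _ = ∫⁻ _y in ball w₀ ρ₀, ENNReal.ofReal (d / 2) := by rw [setLIntegral_const]
    _ ≤ ∫⁻ y in ball w₀ ρ₀, ENNReal.ofReal (infDist y (frontier E)) :=
        setLIntegral_mono' measurableSet_ball hptwise
    _ ≤ ∫⁻ y in (E ∆ F) ∩ closedBall x (d / 2), ENNReal.ofReal (infDist y (frontier E)) :=
        lintegral_mono_set hw₀


end St3

open St3 in
/-- For `n ≥ 2` and `0 < r < R` there is `σ₂ = σ₂(n,r,R) > 0` such that for all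
`E, F ∈ S_{r,R}`, `∫_{∂F} dist(x,∂E)² dH^{n-1}(x) ≤ σ₂ d̃²(F,E)`. -/
theorem statement3 (n : ℕ) (hn : 2 ≤ n) (r R : ℝ) (hr : 0 < r) (hrR : r < R) :
    ∃ σ₂ : ℝ, 0 < σ₂ ∧ ∀ E F : Set (EuclideanSpace ℝ (Fin n)),
      SrR n r R E → SrR n r R F →
      (∫⁻ x in frontier F, ENNReal.ofReal (infDist x (frontier E) ^ 2) ∂μH[(n:ℝ) - 1]) ≤
        ENNReal.ofReal (σ₂ * tildeDistSq n F E) := by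
  have hR0 : (0:ℝ) < R := lt_trans hr hrR
  obtain ⟨A, hA0, hAhl⟩ := ahlfors hn hr hrR
  set ω : ℝ≥0∞ := volume (ball (0 : EuclideanSpace ℝ (Fin n)) 1) with hωdef
  have hω0 : 0 < ω := measure_ball_pos volume 0 one_pos
  have hωtop : ω < ⊤ := measure_ball_lt_top
  set ωr : ℝ := ω.toReal with hωr
  have hωr0 : 0 < ωr := ENNReal.toReal_pos hω0.ne' hωtop.ne
  set c₁ : ℝ := (r / (4 * R)) ^ n / 2 with hc₁
  have hc₁0 : 0 < c₁ := by positivity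
  set C₅ : ℝ := 9 * A * 2 ^ (n - 1) with hC₅
  have hC₅0 : 0 < C₅ := by positivity
  refine ⟨C₅ / c₁ / ωr, by positivity, ?_⟩
  intro E F hE hF
  set g : EuclideanSpace ℝ (Fin n) → ℝ := fun y => infDist y (frontier E) with hgdef
  rcases eq_empty_or_nonempty E with hEemp | hEne
  · -- E empty: LHS is zero
    have hzero : ∀ x : EuclideanSpace ℝ (Fin n),
        ENNReal.ofReal (infDist x (frontier E) ^ 2) = 0 := by
      intro x; rw [hEemp, frontier_empty, infDist_empty]; simp
    have hz : (∫⁻ x in frontier F, ENNReal.ofReal (infDist x (frontier E) ^ 2) ∂μH[(n:ℝ) - 1]) = 0 := by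
      simp_rw [hzero]
      exact lintegral_zero
    rw [hz]
    exact zero_le
  rcases eq_empty_or_nonempty F with hFemp | hFne
  · rw [hFemp, frontier_empty, Measure.restrict_empty, lintegral_zero_measure]
    exact zero_le
  -- main case
  have hEopen := hE.1.1
  have hFopen := hF.1.1
  have hΓmeas : MeasurableSet (frontier F) := isClosed_frontier.measurableSet
  have hgcont : Continuous g := continuous_infDist_pt (frontier E)
  -- frontier E is nonempty and within the ball of radius R
  have hfEne : (frontier E).Nonempty := by
    rcases eq_empty_or_nonempty (frontier E) with hfe | hfe
    · exfalso
      rcases frontier_eq_empty_iff.1 hfe with h1 | h1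
      · exact hEne.ne_empty h1
      · have hp : EuclideanSpace.single (⟨0, by omega⟩ : Fin n) (R + 1) ∈ E := h1 ▸ mem_univ _
        have := hE.2 hp
        rw [mem_ball, dist_eq_norm, sub_zero, EuclideanSpace.norm_single,
          Real.norm_eq_abs, abs_of_pos (by linarith)] at this
        linarith
    · exact hfe
  obtain ⟨y₀, hy₀⟩ := hfEne
  have hy₀R : ‖y₀‖ ≤ R := frontier_norm_ub hE.2 hy₀
  have hgub : ∀ z : EuclideanSpace ℝ (Fin n), z ∈ closedBall (0:EuclideanSpace ℝ (Fin n)) R →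
      g z ≤ 2 * R := by
    intro z hz
    rw [mem_closedBall, dist_eq_norm, sub_zero] at hz
    calc g z ≤ dist z y₀ := infDist_le_dist_of_mem hy₀
      _ ≤ ‖z‖ + ‖y₀‖ := by rw [dist_eq_norm]; exact norm_sub_le _ _
      _ ≤ 2 * R := by linarith
  have hgnn : ∀ z, 0 ≤ g z := fun z => infDist_nonneg
  -- Vitali covering
  set t : Set (EuclideanSpace ℝ (Fin n)) := {z | z ∈ frontier F ∧ 0 < g z} with htdef
  have htR : ∀ a ∈ t, g a / 2 ≤ R := by
    intro a ha
    have haR : ‖a‖ ≤ R := frontier_norm_ub hF.2 ha.1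
    have := hgub a (by rw [mem_closedBall, dist_eq_norm, sub_zero]; exact haR)
    linarith
  obtain ⟨u, hut, hdisj, hcov⟩ :=
    Vitali.exists_disjoint_subfamily_covering_enlargement_closedBall t id (fun z => g z / 2) R
      htR 4 (by norm_num)
  have hucount : u.Countable := by
    apply hdisj.countable_of_nonempty_interior
    intro b hb
    have hb0 : 0 < g b / 2 := by
      have := (hut hb).2; linarith
    exact ⟨b, interior_mono ball_subset_closedBall
      (mem_interior_iff_mem_nhds.2 (ball_mem_nhds b hb0))⟩
  haveI : Countable ↥u := hucount.to_subtype
  -- covering of the frontier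
  set N : Set (EuclideanSpace ℝ (Fin n)) := frontier F ∩ (g ⁻¹' {0}) with hNdef
  have hNmeas : MeasurableSet N := hΓmeas.inter (hgcont.measurable (measurableSet_singleton 0))
  set Γb : ↥u → Set (EuclideanSpace ℝ (Fin n)) :=
    fun b => frontier F ∩ closedBall ↑b (2 * g ↑b) with hΓb
  have hcover : frontier F ⊆ N ∪ ⋃ b : ↥u, Γb b := by
    intro a ha
    rcases eq_or_lt_of_le (hgnn a) with h0 | h0
    · exact Or.inl ⟨ha, by rw [mem_preimage, mem_singleton_iff, ← h0]⟩
    · right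
      obtain ⟨b, hbu, hbsub⟩ := hcov a ⟨ha, h0⟩
      have : a ∈ closedBall (id a) (g a / 2) := mem_closedBall_self (by linarith)
      have h2 : a ∈ closedBall (id b) (4 * (g b / 2)) := hbsub this
      refine mem_iUnion.2 ⟨⟨b, hbu⟩, ?_⟩
      rw [hΓb]
      refine ⟨ha, ?_⟩
      rw [mem_closedBall] at *
      have h2' : dist a (↑b : EuclideanSpace ℝ (Fin n)) ≤ 4 * (g ↑b / 2) := h2
      linarith
  -- term bounds
  have hterm : ∀ b : ↥u, (∫⁻ x in Γb b, ENNReal.ofReal (g x ^ 2) ∂μH[(n:ℝ) - 1]) ≤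
      ENNReal.ofReal (C₅ * g ↑b ^ (n + 1)) := by
    intro b
    have hbt := hut b.2
    have hb0 : 0 < g ↑b := hbt.2
    have hptw : ∀ x ∈ Γb b, ENNReal.ofReal (g x ^ 2) ≤ ENNReal.ofReal (9 * g ↑b ^ 2) := by
      intro x hx
      apply ENNReal.ofReal_le_ofReal
      have h1 : g x ≤ g ↑b + dist x ↑b := infDist_le_infDist_add_dist
      have h2 : dist x ↑b ≤ 2 * g ↑b := hx.2
      nlinarith [hgnn x, hgnn ↑b]
    calc (∫⁻ x in Γb b, ENNReal.ofReal (g x ^ 2) ∂μH[(n:ℝ) - 1]) ≤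
        ∫⁻ _x in Γb b, ENNReal.ofReal (9 * g ↑b ^ 2) ∂μH[(n:ℝ) - 1] :=
          setLIntegral_mono' (hΓmeas.inter measurableSet_closedBall) hptw
      _ = ENNReal.ofReal (9 * g ↑b ^ 2) * μH[(n:ℝ) - 1] (Γb b) := setLIntegral_const _ _
      _ ≤ ENNReal.ofReal (9 * g ↑b ^ 2) * ENNReal.ofReal (A * (2 * g ↑b) ^ (n - 1)) :=
          mul_le_mul_right (hAhl F hF.1 hF.2 ↑b hbt.1 (2 * g ↑b) (by linarith)) _
      _ = ENNReal.ofReal (C₅ * g ↑b ^ (n + 1)) := by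
          rw [← ENNReal.ofReal_mul (by positivity)]
          congr 1
          rw [hC₅, mul_pow, show n + 1 = 2 + (n - 1) by omega, pow_add]
          ring
  -- cone bound per point
  have hcone : ∀ b : ↥u, ENNReal.ofReal (c₁ * g ↑b ^ (n + 1)) * ω ≤
      ∫⁻ y in (E ∆ F) ∩ closedBall ↑b (g ↑b / 2), ENNReal.ofReal (g y) := by
    intro b
    have hbt := hut b.2
    have := cone_bound (by omega) hr hrR hE.1 hE.2 hEne hF.1 hF.2 hbt.1 hbt.2
    rw [hc₁]
    exact this
  -- sum over the disjoint balls
  have hSmeas : ∀ b : ↥u, MeasurableSet ((E ∆ F) ∩ closedBall (↑b) (g ↑b / 2)) :=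
    fun b => (hEopen.measurableSet.symmDiff hFopen.measurableSet).inter measurableSet_closedBall
  have hSdisj : Pairwise (Function.onFun Disjoint
      (fun b : ↥u => (E ∆ F) ∩ closedBall (↑b) (g ↑b / 2))) := by
    intro b1 b2 hne
    have : Disjoint (closedBall (b1:EuclideanSpace ℝ (Fin n)) (g ↑b1 / 2))
        (closedBall (b2:EuclideanSpace ℝ (Fin n)) (g ↑b2 / 2)) :=
      hdisj b1.2 b2.2 (Subtype.coe_injective.ne hne)
    exact this.mono inter_subset_right inter_subset_right
  set D : ℝ≥0∞ := ∫⁻ y in E ∆ F, ENNReal.ofReal (g y) with hDdef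
  have hsumD : (∑' b : ↥u, ∫⁻ y in (E ∆ F) ∩ closedBall ↑b (g ↑b / 2),
      ENNReal.ofReal (g y)) ≤ D := by
    rw [← lintegral_iUnion hSmeas hSdisj]
    exact lintegral_mono_set (iUnion_subset fun b => inter_subset_left)
  -- main chain
  have hmain : (∫⁻ x in frontier F, ENNReal.ofReal (g x ^ 2) ∂μH[(n:ℝ) - 1]) * ω ≤
      ENNReal.ofReal (C₅ / c₁) * D := by
    have hNzero : (∫⁻ x in N, ENNReal.ofReal (g x ^ 2) ∂μH[(n:ℝ) - 1]) = 0 := by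
      have : ∀ x ∈ N, ENNReal.ofReal (g x ^ 2) ≤ 0 := by
        intro x hx
        have : g x = 0 := hx.2
        simp [this]
      refine le_antisymm ?_ zero_le
      calc (∫⁻ x in N, ENNReal.ofReal (g x ^ 2) ∂μH[(n:ℝ) - 1]) ≤
          ∫⁻ _x in N, 0 ∂μH[(n:ℝ) - 1] := setLIntegral_mono' hNmeas this
        _ = 0 := lintegral_zero
    have h1 : (∫⁻ x in frontier F, ENNReal.ofReal (g x ^ 2) ∂μH[(n:ℝ) - 1]) ≤
        ∑' b : ↥u, ENNReal.ofReal (C₅ * g ↑b ^ (n + 1)) := by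
      calc (∫⁻ x in frontier F, ENNReal.ofReal (g x ^ 2) ∂μH[(n:ℝ) - 1]) ≤
          ∫⁻ x in N ∪ ⋃ b : ↥u, Γb b, ENNReal.ofReal (g x ^ 2) ∂μH[(n:ℝ) - 1] :=
            lintegral_mono_set hcover
        _ ≤ (∫⁻ x in N, ENNReal.ofReal (g x ^ 2) ∂μH[(n:ℝ) - 1]) +
            ∫⁻ x in ⋃ b : ↥u, Γb b, ENNReal.ofReal (g x ^ 2) ∂μH[(n:ℝ) - 1] :=
            lintegral_union_le _ _ _
        _ ≤ 0 + ∑' b : ↥u, ∫⁻ x in Γb b, ENNReal.ofReal (g x ^ 2) ∂μH[(n:ℝ) - 1] := by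
            rw [hNzero]
            exact add_le_add le_rfl (lintegral_iUnion_le _ _)
        _ ≤ ∑' b : ↥u, ENNReal.ofReal (C₅ * g ↑b ^ (n + 1)) := by
            rw [zero_add]
            exact ENNReal.tsum_le_tsum hterm
    have h2 : (∑' b : ↥u, ENNReal.ofReal (C₅ * g ↑b ^ (n + 1))) =
        ENNReal.ofReal (C₅ / c₁) * ∑' b : ↥u, ENNReal.ofReal (c₁ * g ↑b ^ (n + 1)) := by
      rw [← ENNReal.tsum_mul_left]
      congr 1
      funext b
      rw [← ENNReal.ofReal_mul (by positivity)]
      congr 1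
      field_simp
    have h3 : (∑' b : ↥u, ENNReal.ofReal (c₁ * g ↑b ^ (n + 1))) * ω ≤ D := by
      rw [← ENNReal.tsum_mul_right]
      exact le_trans (ENNReal.tsum_le_tsum hcone) hsumD
    calc (∫⁻ x in frontier F, ENNReal.ofReal (g x ^ 2) ∂μH[(n:ℝ) - 1]) * ω ≤
        (∑' b : ↥u, ENNReal.ofReal (C₅ * g ↑b ^ (n + 1))) * ω := mul_le_mul_left h1 _
      _ = ENNReal.ofReal (C₅ / c₁) * ((∑' b : ↥u, ENNReal.ofReal (c₁ * g ↑b ^ (n + 1))) * ω) := by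
          rw [h2, mul_assoc]
      _ ≤ ENNReal.ofReal (C₅ / c₁) * D := mul_le_mul_right h3 _
  -- identify D with the pseudo-distance
  have hEFsub : E ∆ F ⊆ ball (0 : EuclideanSpace ℝ (Fin n)) R :=
    (symmDiff_subset_union).trans (union_subset hE.2 hF.2)
  have hEFmeas : MeasurableSet (E ∆ F) := hEopen.measurableSet.symmDiff hFopen.measurableSet
  have hInt : IntegrableOn g (E ∆ F) volume := by
    apply Integrable.mono' (g := fun _ => 2 * R)
    · exact integrableOn_const (lt_of_le_of_lt (measure_mono hEFsub)
        measure_ball_lt_top).ne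
    · exact hgcont.aestronglyMeasurable
    · rw [ae_restrict_iff' hEFmeas]
      apply ae_of_all
      intro y hy
      rw [Real.norm_eq_abs, abs_of_nonneg (hgnn y)]
      exact hgub y (ball_subset_closedBall (hEFsub hy))
  have hD : D = ENNReal.ofReal (tildeDistSq n F E) := by
    rw [hDdef, tildeDistSq]
    exact (ofReal_integral_eq_lintegral_ofReal hInt (ae_of_all _ hgnn)).symm
  -- conclude
  have hfinal : (∫⁻ x in frontier F, ENNReal.ofReal (g x ^ 2) ∂μH[(n:ℝ) - 1]) ≤
      ENNReal.ofReal (C₅ / c₁) * D / ω :=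
    (ENNReal.le_div_iff_mul_le (Or.inl hω0.ne') (Or.inl hωtop.ne)).2 hmain
  refine le_trans hfinal (le_of_eq ?_)
  have hωeq : ω = ENNReal.ofReal ωr := (ENNReal.ofReal_toReal hωtop.ne).symm
  rw [hD, ← ENNReal.ofReal_mul (by positivity), hωeq, ← ENNReal.ofReal_div_of_pos hωr0]
  congr 1
  ring
end
end

section
/- Let n ≥ 2 and ρ > 0, and suppose a bounded open set Ω ⊂ ℝ^n satisfies ρ-reflection. Then sup_{x ∈ ∂Ω} |x| − inf_{x ∈ ∂Ω} |x| ≤ 4ρ. -/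
/-!
Reflecting across the perpendicular bisector of `x` and `y` sends `x` to `y`; this hyperplane is
at distance `(‖x‖² - ‖y‖²) / (2‖x - y‖)` from the origin, so `ρ`-reflection moves `x ∈ Ω` to
`y ∈ Ω` as soon as `2ρ‖x - y‖ < ‖x‖² - ‖y‖²`. Applied twice, first from a point `z ∈ Ω` to a
point `w` on the ray through `p ∉ Ω` beyond `p`, then from `w` back to `p`, this shows
`‖z‖ ≤ ‖p‖ + 2ρ`. Taking `p` on `∂Ω` and passing to the closure, any two boundary points have
norms within `2ρ` of each other.
-/

open MeasureTheory Metric Set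
open scoped ENNReal RealInnerProductSpace

noncomputable section

/-- `Ω` satisfies `ρ`-reflection: it contains `B̄_ρ(0)` and for every unit direction `ν`
and every `s > ρ`, the reflection across the hyperplane `{x·ν = s}` maps
`Ω ∩ {x·ν > s}` into `Ω ∩ {x·ν < s}`. -/
def RhoReflection (n : ℕ) (ρ : ℝ) (Ω : Set (EuclideanSpace ℝ (Fin n))) : Prop :=
  closedBall (0 : EuclideanSpace ℝ (Fin n)) ρ ⊆ Ω ∧
    ∀ ν : EuclideanSpace ℝ (Fin n), ‖ν‖ = 1 → ∀ s : ℝ, ρ < s →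
      (fun x => x - (2 * ⟪x - s • ν, ν⟫) • ν) '' (Ω ∩ {x | s < ⟪x, ν⟫}) ⊆
        Ω ∩ {x | ⟪x, ν⟫ < s}

theorem Real.sSup_sub_sInf_le {A : Set ℝ} {c : ℝ} (hc : 0 ≤ c)
    (h : ∀ a ∈ A, ∀ b ∈ A, b ≤ a + c) : sSup A - sInf A ≤ c := by
  rcases A.eq_empty_or_nonempty with rfl | hA
  · -- `sSup ∅ = sInf ∅ = 0` in `ℝ`
    simpa using hc
  have hsup : ∀ a ∈ A, sSup A - c ≤ a := fun a ha =>
    sub_le_iff_le_add.2 (csSup_le hA fun b hb => h a ha b hb)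
  linarith [le_csInf hA hsup]

namespace RhoReflection

variable {n : ℕ} {ρ : ℝ} {Ω : Set (EuclideanSpace ℝ (Fin n))}

theorem lt_norm_of_notMem (h : RhoReflection n ρ Ω) {p : EuclideanSpace ℝ (Fin n)}
    (hp : p ∉ Ω) : ρ < ‖p‖ :=
  lt_of_not_ge fun hle => hp (h.1 (mem_closedBall_zero_iff.2 hle))

theorem mem_of_lt_sq_norm_sub_sq_norm (h : RhoReflection n ρ Ω)
    {x y : EuclideanSpace ℝ (Fin n)} (hx : x ∈ Ω)
    (hxy : 2 * ρ * ‖x - y‖ < ‖x‖ ^ 2 - ‖y‖ ^ 2) : y ∈ Ω := by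
  have hne : x - y ≠ 0 := fun h0 => by
    rw [sub_eq_zero.1 h0, sub_self, norm_zero, mul_zero, sub_self] at hxy
    exact lt_irrefl _ hxy
  set d := ‖x - y‖
  have hd : 0 < d := norm_pos_iff.2 hne
  set ν := d⁻¹ • (x - y) with hν_def
  have hν : ‖ν‖ = 1 := norm_smul_inv_norm hne
  have hνν : ⟪ν, ν⟫ = 1 := by rw [real_inner_self_eq_norm_sq, hν, one_pow]
  set s := ⟪x, ν⟫ - d / 2 with hs_def
  have hs : 2 * d * s = ‖x‖ ^ 2 - ‖y‖ ^ 2 := by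
    have hsq : d ^ 2 = ‖x‖ ^ 2 - 2 * ⟪x, y⟫ + ‖y‖ ^ 2 := norm_sub_sq_real x y
    rw [hs_def, hν_def, real_inner_smul_right, inner_sub_right, real_inner_self_eq_norm_sq]
    field_simp
    linarith
  have hρs : ρ < s := lt_of_mul_lt_mul_left (by linarith) (by positivity : 0 ≤ 2 * d)
  have hreflect : x - (2 * ⟪x - s • ν, ν⟫) • ν = y := by
    rw [inner_sub_left, real_inner_smul_left, hνν, mul_one, hs_def,
      show 2 * (⟪x, ν⟫ - (⟪x, ν⟫ - d / 2)) = d by ring, hν_def, smul_smul,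
      mul_inv_cancel₀ hd.ne', one_smul, sub_sub_cancel]
  have hxs : s < ⟪x, ν⟫ := by linarith
  exact (h.2 ν hν s hρs ⟨x, ⟨hx, hxs⟩, hreflect⟩).1

theorem norm_le_norm_add_of_notMem (h : RhoReflection n ρ Ω) (hρ : 0 ≤ ρ)
    {p z : EuclideanSpace ℝ (Fin n)} (hp : p ∉ Ω) (hz : z ∈ Ω) : ‖z‖ ≤ ‖p‖ + 2 * ρ := by
  by_contra! hlt
  have hpρ := h.lt_norm_of_notMem hp
  set r := ‖p‖
  have hp0 : p ≠ 0 := norm_pos_iff.1 (hρ.trans_lt hpρ)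
  set u := r⁻¹ • p with hu_def
  have hu : ‖u‖ = 1 := norm_smul_inv_norm hp0
  have hpu : p = r • u := by
    rw [hu_def, smul_smul, mul_inv_cancel₀ (norm_ne_zero_iff.2 hp0), one_smul]
  set t := (r + ‖z‖ - 2 * ρ) / 2 with ht
  have hrt : r < t := by linarith
  have htz : 2 * ρ < ‖z‖ - t := by linarith
  set w := t • u
  have hw : ‖w‖ = t := by rw [norm_smul, hu, mul_one, Real.norm_of_nonneg (by linarith)]
  have hwΩ : w ∈ Ω := by
    refine h.mem_of_lt_sq_norm_sub_sq_norm hz ?_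
    have hzw : ‖z - w‖ ≤ ‖z‖ + t := hw ▸ norm_sub_le z w
    rw [hw]
    calc 2 * ρ * ‖z - w‖ ≤ 2 * ρ * (‖z‖ + t) := by gcongr
      _ < (‖z‖ - t) * (‖z‖ + t) := by gcongr; linarith
      _ = ‖z‖ ^ 2 - t ^ 2 := by ring
  refine hp (h.mem_of_lt_sq_norm_sub_sq_norm hwΩ ?_)
  have hwp : ‖w - p‖ = t - r := by
    rw [hpu, ← sub_smul, norm_smul, hu, mul_one, Real.norm_of_nonneg (by linarith)]
  rw [hwp, hw]
  calc 2 * ρ * (t - r) < (t + r) * (t - r) := mul_lt_mul_of_pos_right (by linarith) (by linarith)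
    _ = t ^ 2 - r ^ 2 := by ring

theorem norm_le_norm_add_of_mem_frontier (h : RhoReflection n ρ Ω) (hρ : 0 ≤ ρ)
    (hΩ : IsOpen Ω) {p q : EuclideanSpace ℝ (Fin n)} (hp : p ∈ frontier Ω)
    (hq : q ∈ frontier Ω) : ‖q‖ ≤ ‖p‖ + 2 * ρ := by
  have hpΩ : p ∉ Ω := (hΩ.frontier_eq ▸ hp).2
  have hcl : closure Ω ⊆ closedBall 0 (‖p‖ + 2 * ρ) :=
    closure_minimal (fun _ hz => mem_closedBall_zero_iff.2 (h.norm_le_norm_add_of_notMem hρ hpΩ hz))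
      isClosed_closedBall
  exact mem_closedBall_zero_iff.1 (hcl hq.1)

end RhoReflection

theorem statement8_general (n : ℕ) (ρ : ℝ) (hρ : 0 < ρ)
    (Ω : Set (EuclideanSpace ℝ (Fin n))) (hopen : IsOpen Ω)
    (hrefl : RhoReflection n ρ Ω) :
    sSup ((fun x => ‖x‖) '' frontier Ω) - sInf ((fun x => ‖x‖) '' frontier Ω) ≤ 4 * ρ := by
  calc _ ≤ 2 * ρ := Real.sSup_sub_sInf_le (by positivity) <| by
        rintro _ ⟨p, hp, rfl⟩ _ ⟨q, hq, rfl⟩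
        exact hrefl.norm_le_norm_add_of_mem_frontier hρ.le hopen hp hq
    _ ≤ 4 * ρ := by linarith

/-- If a bounded open set `Ω ⊆ ℝ^n` satisfies `ρ`-reflection, then
`sup_{x ∈ ∂Ω} |x| - inf_{x ∈ ∂Ω} |x| ≤ 4ρ`. -/
theorem statement8 (n : ℕ) (hn : 2 ≤ n) (ρ : ℝ) (hρ : 0 < ρ)
    (Ω : Set (EuclideanSpace ℝ (Fin n))) (hopen : IsOpen Ω)
    (hbdd : Bornology.IsBounded Ω) (hrefl : RhoReflection n ρ Ω) :
    sSup ((fun x => ‖x‖) '' frontier Ω) - sInf ((fun x => ‖x‖) '' frontier Ω) ≤ 4 * ρ :=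
  statement8_general n ρ hρ Ω hopen hrefl

end
end

section
/- Let n ≥ 2 and r > 0, and let φ : ℝ^n → ℝ be a bounded continuously differentiable function. Denote by Ω(φ) := {φ > 0} the positive set of φ, and assume Ω(φ) is bounded, contains B_r(0), and Dφ ≠ 0 on ∂Ω(φ). Then Ω(φ) ∈ S_r if and only if for every x ∈ ∂Ω(φ) one has x · ( −Dφ(x)/|Dφ(x)| ) ≥ r. -/
/-!
On `∂Ω` we have `φ = 0`, and `min_{|y| ≤ r} ⟪Dφ(x), y⟫ = -r |Dφ(x)|`, so the boundary condition
says `⟪Dφ(x), y - x⟫ ≥ 0` for all `y ∈ B_r(0)`, strictly for `|y| < r`. If `Ω` is star-shaped, the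
segment from `x ∈ ∂Ω` to `y` lies in `closure Ω ⊆ {φ ≥ 0}`, so `x` minimises `φ` on it and the
first-order condition at a minimum gives the inequality. Conversely, if a segment `[y, x]` with
`x ∈ Ω` left `Ω`, then at its last exit point `z ∈ ∂Ω` the function `φ` is minimal on `[z, x]`, so
`⟪Dφ(z), x - y⟫ ≥ 0` and hence `⟪Dφ(z), z - y⟫ ≥ 0`, contradicting the strict boundary condition.
-/

open MeasureTheory Metric Set
open scoped ENNReal RealInnerProductSpace

noncomputable section

theorem StarConvex.closure {𝕜 E : Type*} [Semiring 𝕜] [PartialOrder 𝕜] [AddCommMonoid E]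
    [TopologicalSpace E] [ContinuousAdd E] [Module 𝕜 E] [ContinuousConstSMul 𝕜 E]
    {x : E} {s : Set E} (hs : StarConvex 𝕜 x s) : StarConvex 𝕜 x (closure s) :=
  fun _ hy a b ha hb hab =>
    map_mem_closure (f := fun y' => a • x + b • y')
      (continuous_const.add (continuous_const_smul b)) hy fun _ hy' => hs hy' ha hb hab

section InnerProductSpace

variable {E : Type*} [NormedAddCommGroup E] [InnerProductSpace ℝ E]

theorem inner_gradient_sub_nonneg_of_isMinOn_segment [CompleteSpace E] {φ : E → ℝ} {z w : E}
    (hφ : DifferentiableAt ℝ φ z) (hmin : IsMinOn φ (segment ℝ z w) z) :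
    0 ≤ ⟪gradient φ z, w - z⟫ := by
  have hderiv := hφ.hasFDerivAt.hasFDerivWithinAt (s := segment ℝ z w)
  simpa [← InnerProductSpace.toDual_symm_apply, gradient] using
    hmin.localize.hasFDerivWithinAt_nonneg hderiv
      (sub_mem_posTangentConeAt_of_segment_subset subset_rfl)

theorem neg_mul_norm_lt_inner_of_mem_ball {g y : E} {r : ℝ} (hg : g ≠ 0)
    (hy : y ∈ ball (0 : E) r) : -(r * ‖g‖) < ⟪g, y⟫ := by
  have hy' : ‖y‖ < r := mem_ball_zero_iff.mp hy
  calc -(r * ‖g‖) < -(‖g‖ * ‖y‖) := by nlinarith [norm_pos_iff.mpr hg]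
    _ ≤ ⟪g, y⟫ := neg_le_of_abs_le (abs_real_inner_le_norm g y)

theorem le_neg_mul_norm_of_forall_mem_ball {g : E} {r c : ℝ} (hr : 0 < r)
    (h : ∀ y ∈ ball (0 : E) r, c ≤ ⟪g, y⟫) : c ≤ -(r * ‖g‖) := by
  have hclosed : ∀ y ∈ closedBall (0 : E) r, c ≤ ⟪g, y⟫ := by
    rw [← closure_ball _ hr.ne']
    exact closure_minimal (t := {y | c ≤ ⟪g, y⟫}) h
      (isClosed_le continuous_const (continuous_const.inner continuous_id))
  have hy : -((r * ‖g‖⁻¹) • g) ∈ closedBall (0 : E) r := by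
    rw [mem_closedBall_zero_iff, norm_neg, norm_smul, Real.norm_eq_abs,
      abs_of_nonneg (by positivity), mul_assoc]
    exact mul_le_of_le_one_right hr.le (inv_mul_le_one_of_le₀ le_rfl (norm_nonneg g))
  calc c ≤ ⟪g, -((r * ‖g‖⁻¹) • g)⟫ := hclosed _ hy
    _ = -(r * ‖g‖) := by
      rw [inner_neg_right, real_inner_smul_right, real_inner_self_eq_norm_sq]
      rcases eq_or_ne ‖g‖ 0 with h0 | h0
      · simp [h0]
      · field_simp

theorem le_inner_neg_inv_norm_smul_iff {g x : E} {r : ℝ} (hg : g ≠ 0) :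
    r ≤ ⟪x, -(‖g‖⁻¹ • g)⟫ ↔ ⟪g, x⟫ ≤ -(r * ‖g‖) := by
  have hg' : 0 < ‖g‖ := norm_pos_iff.mpr hg
  have hdiv : -(‖g‖⁻¹ * ⟪g, x⟫) = -⟪g, x⟫ / ‖g‖ := by ring
  rw [inner_neg_right, real_inner_smul_right, real_inner_comm, hdiv, le_div_iff₀ hg']
  constructor <;> intro h <;> linarith

theorem exists_lineMap_notMem_segment_subset_closure {s : Set E} (hs : IsOpen s) {x y : E}
    (hx : x ∈ s) (hxy : ¬ segment ℝ y x ⊆ s) :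
    ∃ t ∈ Ico (0 : ℝ) 1, AffineMap.lineMap y x t ∉ s ∧
      segment ℝ (AffineMap.lineMap y x t) x ⊆ closure s := by
  set L : ℝ →ᵃ[ℝ] E := AffineMap.lineMap y x
  have hL : Continuous L := AffineMap.lineMap_continuous
  obtain ⟨_, hp, hps⟩ := not_subset.mp hxy
  rw [segment_eq_image_lineMap] at hp
  obtain ⟨t, ht, rfl⟩ := hp
  have hcompact : IsCompact (Icc 0 1 ∩ L ⁻¹' sᶜ) :=
    isCompact_Icc.inter_right (hs.isClosed_compl.preimage hL)
  obtain ⟨t₀, ⟨ht₀, ht₀s⟩, ht₀max⟩ := hcompact.exists_isGreatest ⟨t, ht, hps⟩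
  have hL1 : L 1 = x := AffineMap.lineMap_apply_one y x
  have ht₀1 : t₀ ≠ 1 := by
    rintro rfl
    exact ht₀s (hL1 ▸ hx)
  have hafter : L '' Ioc t₀ 1 ⊆ s := by
    rintro _ ⟨u, hu, rfl⟩
    by_contra hus
    exact (not_le.mpr hu.1) (ht₀max ⟨⟨ht₀.1.trans hu.1.le, hu.2⟩, hus⟩)
  refine ⟨t₀, ⟨ht₀.1, ht₀.2.lt_of_ne ht₀1⟩, ht₀s, ?_⟩
  calc segment ℝ (L t₀) x = L '' closure (Ioc t₀ 1) := by
        rw [closure_Ioc ht₀1, ← segment_eq_Icc ht₀.2, image_segment, hL1]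
    _ ⊆ closure (L '' Ioc t₀ 1) := image_closure_subset_closure_image hL
    _ ⊆ closure s := closure_mono hafter

variable [CompleteSpace E] {φ : E → ℝ}

theorem inner_gradient_le_of_starConvex (hφ : Differentiable ℝ φ) {x y : E}
    (hy : StarConvex ℝ y {x | 0 < φ x}) (hx : x ∈ frontier {x | 0 < φ x}) :
    ⟪gradient φ x, x⟫ ≤ ⟪gradient φ x, y⟫ := by
  have hφx : 0 = φ x := frontier_lt_subset_eq continuous_const hφ.continuous hx
  have hseg : segment ℝ x y ⊆ {x | 0 ≤ φ x} := by
    rw [segment_symm]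
    exact (starConvex_iff_segment_subset.mp hy.closure hx.1).trans
      (closure_lt_subset_le continuous_const hφ.continuous)
  have hmin : IsMinOn φ (segment ℝ x y) x := isMinOn_iff.mpr fun p hp => hφx ▸ hseg hp
  have := inner_gradient_sub_nonneg_of_isMinOn_segment (hφ x) hmin
  rw [inner_sub_right] at this
  linarith

theorem starConvex_of_forall_frontier_inner_gradient_lt (hφ : Differentiable ℝ φ) {y : E}
    (h : ∀ z ∈ frontier {x | 0 < φ x}, ⟪gradient φ z, z⟫ < ⟪gradient φ z, y⟫) :
    StarConvex ℝ y {x | 0 < φ x} := by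
  have hopen : IsOpen {x | 0 < φ x} := isOpen_lt continuous_const hφ.continuous
  refine starConvex_iff_segment_subset.mpr fun x hx => ?_
  by_contra hxy
  obtain ⟨t, ht, hts, hseg⟩ := exists_lineMap_notMem_segment_subset_closure hopen hx hxy
  set z := AffineMap.lineMap y x t
  have hz : z ∈ frontier {x | 0 < φ x} := by
    rw [hopen.frontier_eq]
    exact ⟨hseg (left_mem_segment ℝ z x), hts⟩
  have hφz : 0 = φ z := frontier_lt_subset_eq continuous_const hφ.continuous hz
  have hmin : IsMinOn φ (segment ℝ z x) z := isMinOn_iff.mpr fun p hp =>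
    hφz ▸ closure_lt_subset_le continuous_const hφ.continuous (hseg hp)
  have hxz := inner_gradient_sub_nonneg_of_isMinOn_segment (hφ z) hmin
  have hzy : z - y = t • (x - y) := AffineMap.lineMap_vsub_left y x t
  have hxz' : x - z = (1 - t) • (x - y) := AffineMap.right_vsub_lineMap y x t
  have := h z hz
  rw [hxz', real_inner_smul_right] at hxz
  have hzy' : ⟪gradient φ z, z⟫ - ⟪gradient φ z, y⟫ = t * ⟪gradient φ z, x - y⟫ := by
    rw [← inner_sub_right, hzy, real_inner_smul_right]
  nlinarith [ht.1, ht.2]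

end InnerProductSpace

theorem starShaped_iff_forall_starConvex {n : ℕ} {r : ℝ} {Ω : Set (EuclideanSpace ℝ (Fin n))}
    (hopen : IsOpen Ω) (hbdd : Bornology.IsBounded Ω) :
    StarShaped n r Ω ↔ ∀ y ∈ ball (0 : EuclideanSpace ℝ (Fin n)) r, StarConvex ℝ y Ω := by
  simp only [StarShaped, starConvex_iff_segment_subset, hopen, hbdd, true_and]

theorem statement11_general (n : ℕ) (r : ℝ) (hr : 0 < r)
    (φ : EuclideanSpace ℝ (Fin n) → ℝ) (hC1 : ContDiff ℝ 1 φ)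
    (hΩbdd : Bornology.IsBounded {x | 0 < φ x})
    (hgrad : ∀ x ∈ frontier {x | 0 < φ x}, gradient φ x ≠ 0) :
    StarShaped n r {x | 0 < φ x} ↔
      ∀ x ∈ frontier {x | 0 < φ x},
        r ≤ ⟪x, -(‖gradient φ x‖⁻¹ • gradient φ x)⟫ := by
  have hφ : Differentiable ℝ φ := hC1.differentiable one_ne_zero
  rw [starShaped_iff_forall_starConvex (isOpen_lt continuous_const hφ.continuous) hΩbdd]
  constructor
  · intro hstar x hx
    rw [le_inner_neg_inv_norm_smul_iff (hgrad x hx)]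
    exact le_neg_mul_norm_of_forall_mem_ball hr fun y hy =>
      inner_gradient_le_of_starConvex hφ (hstar y hy) hx
  · intro hnormal y hy
    refine starConvex_of_forall_frontier_inner_gradient_lt hφ fun z hz => ?_
    exact ((le_inner_neg_inv_norm_smul_iff (hgrad z hz)).mp (hnormal z hz)).trans_lt
      (neg_mul_norm_lt_inner_of_mem_ball (hgrad z hz) hy)

/-- For a bounded `C¹` function `φ` whose positive set `Ω(φ) = {φ > 0}` is bounded,
contains `B_r(0)`, and with `Dφ ≠ 0` on `∂Ω(φ)`, one has `Ω(φ) ∈ S_r` if and only if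
`x · (-Dφ(x)/|Dφ(x)|) ≥ r` for every `x ∈ ∂Ω(φ)`. -/
theorem statement11 (n : ℕ) (hn : 2 ≤ n) (r : ℝ) (hr : 0 < r)
    (φ : EuclideanSpace ℝ (Fin n) → ℝ) (hC1 : ContDiff ℝ 1 φ)
    (hbdd : ∃ M : ℝ, ∀ x, |φ x| ≤ M)
    (hΩbdd : Bornology.IsBounded {x | 0 < φ x})
    (hball : ball (0 : EuclideanSpace ℝ (Fin n)) r ⊆ {x | 0 < φ x})
    (hgrad : ∀ x ∈ frontier {x | 0 < φ x}, gradient φ x ≠ 0) :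
    StarShaped n r {x | 0 < φ x} ↔
      ∀ x ∈ frontier {x | 0 < φ x},
        r ≤ ⟪x, -(‖gradient φ x‖⁻¹ • gradient φ x)⟫ :=
  statement11_general n r hr φ hC1 hΩbdd hgrad
end
end

section
/- Let n ≥ 2 and ρ > 0, and suppose a bounded open set Ω ⊂ ℝ^n satisfies ρ-reflection. Then Ω ∈ S_r with r := ( (inf_{x ∈ ∂Ω} |x|)² − ρ² )^{1/2}. -/
/-!
Let `y` be in the ball of radius `r` and `x ∈ Ω`, and suppose the segment from `y` to `x` leaves
`Ω`. Since the segment is connected, it meets `∂Ω` at some `z ≠ x`; write `x = z + c u` with `u`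
a unit vector and `c > 0`. Moving along `u` does not change the component orthogonal to `u`, so
`⟪z, u⟫² - ⟪y, u⟫² = ‖z‖² - ‖y‖² > ρ²`, because `‖z‖ ≥ inf_{∂Ω} |·|` and `‖y‖ < r`; this forces
`⟪z, u⟫ > ρ`. Reflecting `x` across the hyperplane `{⟪·, u⟫ = ⟪z, u⟫ + c / 2}` gives `z`, so
`ρ`-reflection puts `z` in `Ω`, contradicting `z ∈ ∂Ω`.
-/

open MeasureTheory Metric Set
open scoped ENNReal RealInnerProductSpace

noncomputable section

theorem exists_unit_of_mem_segment {E : Type*} [NormedAddCommGroup E] [NormedSpace ℝ E]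
    {x y z : E} (hz : z ∈ segment ℝ y x) (hzx : z ≠ x) :
    ∃ u : E, ‖u‖ = 1 ∧ z = y + ‖z - y‖ • u ∧ x = z + ‖x - z‖ • u := by
  have hxz : 0 < ‖x - z‖ := norm_pos_iff.2 (sub_ne_zero.2 hzx.symm)
  have hray := (mem_segment_iff_sameRay.1 hz).norm_smul_eq
  refine ⟨‖x - z‖⁻¹ • (x - z), ?_, ?_, ?_⟩
  · rw [norm_smul, norm_inv, norm_norm, inv_mul_cancel₀ hxz.ne']
  · rw [smul_smul, mul_comm, ← smul_smul, hray, smul_smul, inv_mul_cancel₀ hxz.ne', one_smul,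
      add_sub_cancel]
  · rw [smul_smul, mul_inv_cancel₀ hxz.ne', one_smul, add_sub_cancel]

theorem lt_inner_add_smul_of_sq_add_sq_lt {E : Type*} [NormedAddCommGroup E]
    [InnerProductSpace ℝ E] {u y : E} (hu : ‖u‖ = 1) {τ ρ : ℝ} (hτ : 0 ≤ τ)
    (h : ρ ^ 2 + ‖y‖ ^ 2 < ‖y + τ • u‖ ^ 2) : ρ < ⟪y + τ • u, u⟫ := by
  have hnorm : ‖y + τ • u‖ ^ 2 = ‖y‖ ^ 2 + 2 * τ * ⟪y, u⟫ + τ ^ 2 := by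
    rw [norm_add_sq_real, real_inner_smul_right, norm_smul, Real.norm_of_nonneg hτ, hu]
    ring
  have hinner : ⟪y + τ • u, u⟫ = ⟪y, u⟫ + τ := by
    rw [inner_add_left, real_inner_smul_left, real_inner_self_eq_norm_sq, hu]
    ring
  rw [hinner]
  have hsq : ρ ^ 2 + ⟪y, u⟫ ^ 2 < (⟪y, u⟫ + τ) ^ 2 := by nlinarith
  have hpos : 0 < ⟪y, u⟫ + τ := by nlinarith
  exact (le_abs_self ρ).trans_lt (abs_lt_of_sq_lt_sq (by nlinarith) hpos.le)

theorem sInf_norm_image_le {E : Type*} [SeminormedAddCommGroup E] {s : Set E} {z : E}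
    (hz : z ∈ s) : sInf ((fun x => ‖x‖) '' s) ≤ ‖z‖ :=
  csInf_le ⟨0, by rintro _ ⟨w, -, rfl⟩; exact norm_nonneg w⟩ (mem_image_of_mem _ hz)

theorem sq_add_sq_lt_norm_sq_of_lt_sqrt {E : Type*} [SeminormedAddCommGroup E] {s : Set E}
    {y z : E} (hz : z ∈ s) {ρ : ℝ}
    (hy : ‖y‖ < √(sInf ((fun x => ‖x‖) '' s) ^ 2 - ρ ^ 2)) : ρ ^ 2 + ‖y‖ ^ 2 < ‖z‖ ^ 2 := by
  have hy2 := (Real.lt_sqrt (norm_nonneg y)).1 hy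
  have hinf_nonneg : 0 ≤ sInf ((fun x => ‖x‖) '' s) :=
    Real.sInf_nonneg (by rintro _ ⟨w, -, rfl⟩; exact norm_nonneg w)
  have := pow_le_pow_left₀ hinf_nonneg (sInf_norm_image_le hz) 2
  linarith

theorem RhoReflection.mem_of_add_smul_mem {n : ℕ} {ρ : ℝ} {Ω : Set (EuclideanSpace ℝ (Fin n))}
    (hrefl : RhoReflection n ρ Ω) {u z : EuclideanSpace ℝ (Fin n)} (hu : ‖u‖ = 1)
    (hz : ρ < ⟪z, u⟫) {c : ℝ} (hc : 0 < c) (hx : z + c • u ∈ Ω) : z ∈ Ω := by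
  have huu : ⟪u, u⟫ = 1 := by rw [real_inner_self_eq_norm_sq, hu, one_pow]
  have hxu : ⟪z + c • u, u⟫ = ⟪z, u⟫ + c := by
    rw [inner_add_left, real_inner_smul_left, huu, mul_one]
  set s := ⟪z, u⟫ + c / 2 with hs
  have hreflect : z + c • u - (2 * ⟪z + c • u - s • u, u⟫) • u = z := by
    rw [inner_sub_left, real_inner_smul_left, huu, hxu]
    module
  have hx_above : s < ⟪z + c • u, u⟫ := by linarith
  have himage := hrefl.2 u hu s (by linarith) (mem_image_of_mem _ ⟨hx, hx_above⟩)
  rw [hreflect] at himage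
  exact himage.1

theorem statement12_general (n : ℕ) (ρ : ℝ)
    (Ω : Set (EuclideanSpace ℝ (Fin n))) (hopen : IsOpen Ω)
    (hbdd : Bornology.IsBounded Ω) (hrefl : RhoReflection n ρ Ω) :
    StarShaped n (Real.sqrt ((sInf ((fun x => ‖x‖) '' frontier Ω)) ^ 2 - ρ ^ 2)) Ω := by
  refine ⟨hopen, hbdd, fun y hy x hx => ?_⟩
  refine (convex_segment y x).isPreconnected.subset_of_closure_inter_subset hopen
    ⟨x, right_mem_segment ℝ y x, hx⟩ ?_
  rintro z ⟨hz_closure, hz_segment⟩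
  by_contra hzΩ
  have hz_frontier : z ∈ frontier Ω := ⟨hz_closure, by rwa [hopen.interior_eq]⟩
  have hzx : z ≠ x := fun h => hzΩ (h ▸ hx)
  obtain ⟨u, hu, hzy, hxz⟩ := exists_unit_of_mem_segment hz_segment hzx
  have hsq := sq_add_sq_lt_norm_sq_of_lt_sqrt hz_frontier (mem_ball_zero_iff.1 hy)
  rw [hzy] at hsq
  have hzu : ρ < ⟪z, u⟫ := hzy ▸ lt_inner_add_smul_of_sq_add_sq_lt hu (norm_nonneg _) hsq
  exact hzΩ (hrefl.mem_of_add_smul_mem hu hzu (norm_pos_iff.2 (sub_ne_zero.2 hzx.symm))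
    (hxz ▸ hx))

/-- If a bounded open set `Ω` satisfies `ρ`-reflection, then `Ω ∈ S_r` with
`r = ((inf_{x ∈ ∂Ω} |x|)² - ρ²)^{1/2}`. -/
theorem statement12 (n : ℕ) (hn : 2 ≤ n) (ρ : ℝ) (hρ : 0 < ρ)
    (Ω : Set (EuclideanSpace ℝ (Fin n))) (hopen : IsOpen Ω)
    (hbdd : Bornology.IsBounded Ω) (hrefl : RhoReflection n ρ Ω) :
    StarShaped n (Real.sqrt ((sInf ((fun x => ‖x‖) '' frontier Ω)) ^ 2 - ρ ^ 2)) Ω :=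
  statement12_general n ρ Ω hopen hbdd hrefl
end
end

section
/- Let n ≥ 2 and 0 < r < R, and suppose Ω ∈ S_{r,R}. If there exists ρ > 0 such that the closed ball B̄_ρ(0) is contained in Ω and ρ² ≥ 5(R² − r²), then Ω satisfies ρ-reflection. -/
/-!
Let `t = ⟪x, ν⟫ > s`; the reflection of `x` across `{⟪·, ν⟫ = s}` is `x' = x - 2(t - s)ν`, and
`⟪x', ν⟫ = 2s - t < s`. If `t ≤ 2s`, then `x'` lies on the segment from `x` to its projection
`x - tν` onto `ν⊥`, and `‖x - tν‖² = ‖x‖² - t² < R² - ρ² ≤ r²`, so star-shapedness with respect to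
`B_r(0)` puts `x'` in `Ω`. If `t > 2s`, then `‖x'‖² = ‖x‖² - 4s(t - s) < R² - 4ρ² ≤ r²`, so `x'` lies
in `B_r(0)` itself, which is contained in `Ω`.
-/

open MeasureTheory Metric Set
open scoped ENNReal RealInnerProductSpace

noncomputable section

section Reflection

variable {E : Type*} [NormedAddCommGroup E] [InnerProductSpace ℝ E] {ν : E}

theorem sub_smul_mem_segment (x v : E) {a b : ℝ} (ha : 0 ≤ a) (hab : a ≤ b) :
    x - a • v ∈ segment ℝ (x - b • v) x := by
  rw [mem_segment_iff_sameRay, sub_sub_sub_cancel_left, ← sub_smul, sub_sub_cancel]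
  exact ((SameRay.refl v).nonneg_smul_left (sub_nonneg.2 hab)).nonneg_smul_right ha

theorem inner_sub_smul_of_norm_eq_one (hν : ‖ν‖ = 1) (x : E) (a : ℝ) :
    ⟪x - a • ν, ν⟫ = ⟪x, ν⟫ - a := by
  rw [inner_sub_left, real_inner_smul_left, real_inner_self_eq_norm_sq, hν]
  ring

theorem norm_sub_smul_sq_of_norm_eq_one (hν : ‖ν‖ = 1) (x : E) (a : ℝ) :
    ‖x - a • ν‖ ^ 2 = ‖x‖ ^ 2 - 2 * a * ⟪x, ν⟫ + a ^ 2 := by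
  rw [norm_sub_sq_real, real_inner_smul_right, norm_smul, hν, mul_one, Real.norm_eq_abs, sq_abs]
  ring

variable {x : E} {r R ρ s : ℝ}

theorem norm_sub_inner_smul_lt (hν : ‖ν‖ = 1) (hr : 0 < r) (hρ : 0 ≤ ρ)
    (hρRr : R ^ 2 - r ^ 2 ≤ ρ ^ 2) (hx : ‖x‖ < R) (hρx : ρ ≤ ⟪x, ν⟫) :
    ‖x - ⟪x, ν⟫ • ν‖ < r := by
  have hsq := norm_sub_smul_sq_of_norm_eq_one hν x ⟪x, ν⟫
  have hxR : ‖x‖ ^ 2 < R ^ 2 := pow_lt_pow_left₀ hx (norm_nonneg x) two_ne_zero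
  have hρx2 : ρ ^ 2 ≤ ⟪x, ν⟫ ^ 2 := pow_le_pow_left₀ hρ hρx 2
  exact lt_of_pow_lt_pow_left₀ 2 hr.le (by linarith)

theorem norm_reflect_lt (hν : ‖ν‖ = 1) (hr : 0 < r) (hρ : 0 ≤ ρ)
    (hρRr : R ^ 2 - r ^ 2 ≤ ρ ^ 2) (hx : ‖x‖ < R) (hρs : ρ < s) (hsx : 2 * s < ⟪x, ν⟫) :
    ‖x - (2 * (⟪x, ν⟫ - s)) • ν‖ < r := by
  have hsq := norm_sub_smul_sq_of_norm_eq_one hν x (2 * (⟪x, ν⟫ - s))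
  have hxR : ‖x‖ ^ 2 < R ^ 2 := pow_lt_pow_left₀ hx (norm_nonneg x) two_ne_zero
  have hρs2 : ρ ^ 2 < s * (⟪x, ν⟫ - s) := by nlinarith
  exact lt_of_pow_lt_pow_left₀ 2 hr.le (by nlinarith)

theorem reflect_mem_of_starConvex_ball {Ω : Set E}
    (hstar : ∀ y ∈ ball (0 : E) r, ∀ x ∈ Ω, segment ℝ y x ⊆ Ω)
    (hν : ‖ν‖ = 1) (hr : 0 < r) (hρ : 0 ≤ ρ) (hρRr : R ^ 2 - r ^ 2 ≤ ρ ^ 2)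
    (hxΩ : x ∈ Ω) (hx : ‖x‖ < R) (hρs : ρ < s) (hsx : s < ⟪x, ν⟫) :
    x - (2 * (⟪x, ν⟫ - s)) • ν ∈ Ω := by
  rcases le_or_gt ⟪x, ν⟫ (2 * s) with hle | hlt
  · have hproj := norm_sub_inner_smul_lt hν hr hρ hρRr hx (hρs.trans hsx).le
    exact hstar _ (mem_ball_zero_iff.2 hproj) x hxΩ
      (sub_smul_mem_segment x ν (by linarith) (by linarith))
  · have hrefl := norm_reflect_lt hν hr hρ hρRr hx hρs hlt
    exact hstar _ (mem_ball_zero_iff.2 hrefl) x hxΩ (left_mem_segment ℝ _ x)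

end Reflection

theorem statement13_general (n : ℕ) (r R : ℝ) (hr : 0 < r)
    (Ω : Set (EuclideanSpace ℝ (Fin n))) (hΩ : SrR n r R Ω)
    (ρ : ℝ) (hρ : 0 < ρ) (hball : closedBall (0 : EuclideanSpace ℝ (Fin n)) ρ ⊆ Ω)
    (hρ2 : 5 * (R ^ 2 - r ^ 2) ≤ ρ ^ 2) :
    RhoReflection n ρ Ω := by
  obtain ⟨⟨-, -, hstar⟩, hΩR⟩ := hΩ
  have hρRr : R ^ 2 - r ^ 2 ≤ ρ ^ 2 := by
    rcases le_or_gt 0 (R ^ 2 - r ^ 2) with h | h <;> nlinarith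
  refine ⟨hball, fun ν hν s hρs => ?_⟩
  rintro _ ⟨x, ⟨hxΩ, hsx⟩, rfl⟩
  simp only [inner_sub_smul_of_norm_eq_one hν]
  refine ⟨reflect_mem_of_starConvex_ball hstar hν hr hρ.le hρRr hxΩ
    (mem_ball_zero_iff.1 (hΩR hxΩ)) hρs hsx, ?_⟩
  show ⟪x - (2 * (⟪x, ν⟫ - s)) • ν, ν⟫ < s
  rw [inner_sub_smul_of_norm_eq_one hν]
  linarith [show s < ⟪x, ν⟫ from hsx]

/-- If `Ω ∈ S_{r,R}` contains `B̄_ρ(0)` with `ρ² ≥ 5(R² - r²)`, then `Ω` satisfies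
`ρ`-reflection. -/
theorem statement13 (n : ℕ) (hn : 2 ≤ n) (r R : ℝ) (hr : 0 < r) (hrR : r < R)
    (Ω : Set (EuclideanSpace ℝ (Fin n))) (hΩ : SrR n r R Ω)
    (ρ : ℝ) (hρ : 0 < ρ) (hball : closedBall (0 : EuclideanSpace ℝ (Fin n)) ρ ⊆ Ω)
    (hρ2 : 5 * (R ^ 2 - r ^ 2) ≤ ρ ^ 2) :
    RhoReflection n ρ Ω :=
  statement13_general n r R hr Ω hΩ ρ hρ hball hρ2
end
end
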